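/- arXiv:2408.00285 — 6 statements merged into one kernel-verified Lean document; each statement's English description precedes it below -/
import Mathlib

section
/- Let M be a compact metric space and f : M → M a minimal homeomorphism (i.e., every orbit {fⁿ(x) : n ∈ ℤ} is dense in M). Then for every ε > 0 there exists a positive integer L = L(ε) such that for every f-invariant ergodic Borel probability measure μ on M and every x ∈ M one has μ(B(x,ε)) ≥ 1/L, where B(x,ε) denotes the open ball of radius ε centered at x. -/
/-!
By minimality every orbit meets a given nonempty open set `U`, so the open sets `(fⁿ)⁻¹ U`
cover `M`, and by compactness finitely many of them, say `k`, already do. Each has the same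
measure as `U` for any invariant measure `μ`, hence `μ U ≥ 1 / k` with `k` independent of `μ`.
Covering `M` by finitely many balls of radius `ε / 2`, every ball of radius `ε` contains one
of them, which makes the bound uniform in the centre as well.
-/

open MeasureTheory Metric Set
open scoped ENNReal

namespace Homeomorph

variable {X : Type*} [TopologicalSpace X]

theorem coe_toEquiv_zpow (f : X ≃ₜ X) (n : ℤ) : ⇑(f.toEquiv ^ n) = ⇑(f ^ n) := by
  let toPermHom : (X ≃ₜ X) →* Equiv.Perm X :=
    { toFun := Homeomorph.toEquiv, map_one' := rfl, map_mul' := fun _ _ => rfl }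
  exact congrArg DFunLike.coe (map_zpow toPermHom f n).symm

variable [MeasurableSpace X] [BorelSpace X] {μ : Measure X}

theorem measurePreserving_zpow {f : X ≃ₜ X} (hf : MeasurePreserving f μ μ) (n : ℤ) :
    MeasurePreserving ⇑(f ^ n) μ μ := by
  have hf_symm : MeasurePreserving f.symm μ μ := hf.symm f.toMeasurableEquiv
  induction n using Int.induction_on with
  | zero => exact .id μ
  | succ n ih => rw [zpow_add_one]; exact ih.comp hf
  | pred n ih => rw [zpow_sub_one]; exact ih.comp hf_symm

end Homeomorph

theorem MeasureTheory.measure_univ_le_card_mul_of_univ_subset_biUnion_preimage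
    {α ι : Type*} [MeasurableSpace α] {μ : Measure α} {g : ι → α → α}
    (hg : ∀ i, MeasurePreserving (g i) μ μ) {t : Finset ι} {s : Set α}
    (hcover : univ ⊆ ⋃ i ∈ t, g i ⁻¹' s) :
    μ univ ≤ t.card * μ s :=
  calc μ univ ≤ μ (⋃ i ∈ t, g i ⁻¹' s) := measure_mono hcover
    _ ≤ ∑ i ∈ t, μ (g i ⁻¹' s) := measure_biUnion_finset_le t _
    _ ≤ ∑ _i ∈ t, μ s := Finset.sum_le_sum fun i _ => (hg i).measure_preimage_le s
    _ = t.card * μ s := by rw [Finset.sum_const, nsmul_eq_mul]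

section DenseOrbits

variable {X : Type*} [TopologicalSpace X] [CompactSpace X] (f : X ≃ₜ X)

theorem exists_finset_univ_subset_biUnion_preimage_zpow_of_dense_orbits
    (hmin : ∀ x, Dense (range fun n : ℤ => (f ^ n) x)) {U : Set X} (hU : IsOpen U)
    (hne : U.Nonempty) : ∃ t : Finset ℤ, univ ⊆ ⋃ n ∈ t, ⇑(f ^ n) ⁻¹' U := by
  refine isCompact_univ.elim_finite_subcover (fun n : ℤ => ⇑(f ^ n) ⁻¹' U)
    (fun n => hU.preimage (f ^ n).continuous) fun x _ => ?_
  obtain ⟨_, ⟨n, rfl⟩, hn⟩ := (hmin x).exists_mem_open hU hne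
  exact mem_iUnion.2 ⟨n, hn⟩

variable [MeasurableSpace X] [BorelSpace X]

theorem exists_pos_le_measure_of_dense_orbits
    (hmin : ∀ x, Dense (range fun n : ℤ => (f ^ n) x)) {U : Set X} (hU : IsOpen U)
    (hne : U.Nonempty) :
    ∃ δ : ℝ≥0∞, 0 < δ ∧ ∀ μ : Measure X, IsProbabilityMeasure μ →
      MeasurePreserving f μ μ → δ ≤ μ U := by
  obtain ⟨t, ht⟩ := exists_finset_univ_subset_biUnion_preimage_zpow_of_dense_orbits f hmin hU hne
  refine ⟨(t.card : ℝ≥0∞)⁻¹, ENNReal.inv_pos.2 (ENNReal.natCast_ne_top _), fun μ _ hf => ?_⟩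
  have hle : 1 ≤ t.card * μ U := by
    simpa using measure_univ_le_card_mul_of_univ_subset_biUnion_preimage
      (Homeomorph.measurePreserving_zpow hf) ht
  have hcard : (t.card : ℝ≥0∞) ≠ 0 := by
    rintro h
    simp [h] at hle
  exact (ENNReal.inv_le_iff_le_mul (fun _ => hcard) (by simp)).2 hle

end DenseOrbits

theorem exists_pos_le_measure_ball_of_dense_orbits {X : Type*} [PseudoMetricSpace X]
    [CompactSpace X] [MeasurableSpace X] [BorelSpace X] (f : X ≃ₜ X)
    (hmin : ∀ x, Dense (range fun n : ℤ => (f ^ n) x)) {ε : ℝ} (hε : 0 < ε) :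
    ∃ δ : ℝ≥0∞, 0 < δ ∧ ∀ μ : Measure X, IsProbabilityMeasure μ →
      MeasurePreserving f μ μ → ∀ x, δ ≤ μ (ball x ε) := by
  obtain ⟨s, -, hs⟩ := isCompact_univ.elim_nhds_subcover (fun c : X => ball c (ε / 2))
    fun c _ => ball_mem_nhds c (half_pos hε)
  choose δ hδ_pos hδ using fun c : X =>
    exists_pos_le_measure_of_dense_orbits f hmin (isOpen_ball (x := c) (ε := ε / 2))
      ⟨c, mem_ball_self (half_pos hε)⟩
  refine ⟨s.inf δ, Finset.lt_inf_iff ENNReal.zero_lt_top |>.2 fun c _ => hδ_pos c,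
    fun μ hμ hf x => ?_⟩
  obtain ⟨c, hc, hxc⟩ : ∃ c ∈ s, x ∈ ball c (ε / 2) := by simpa using hs (mem_univ x)
  calc s.inf δ ≤ δ c := Finset.inf_le hc
    _ ≤ μ (ball c (ε / 2)) := hδ c μ hμ hf
    _ ≤ μ (ball x ε) := measure_mono <| ball_subset_ball' <| by
        rw [mem_ball'] at hxc; linarith

/-- Let `M` be a compact metric space and `f : M → M` a minimal
homeomorphism (every orbit `{fⁿ x : n ∈ ℤ}` is dense).  Then for every `ε > 0` there is a
positive integer `L` such that every `f`-invariant ergodic Borel probability measure gives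
every open ball of radius `ε` measure at least `1 / L`. -/
theorem ball_measure_lower_bound_of_minimal
    {M : Type*} [MetricSpace M] [CompactSpace M] [MeasurableSpace M] [BorelSpace M]
    (f : M ≃ₜ M)
    (hmin : ∀ x : M, Dense (Set.range fun n : ℤ => (f.toEquiv ^ n) x)) :
    ∀ ε > 0, ∃ L : ℕ, 0 < L ∧
      ∀ μ : Measure M, IsProbabilityMeasure μ →
        MeasurePreserving f μ μ →
        (∀ B : Set M, MeasurableSet B → f ⁻¹' B = B → μ B = 0 ∨ μ B = 1) →
        ∀ x : M, (L : ENNReal)⁻¹ ≤ μ (Metric.ball x ε) := by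
  intro ε hε
  simp only [Homeomorph.coe_toEquiv_zpow] at hmin
  obtain ⟨δ, hδ_pos, hδ⟩ := exists_pos_le_measure_ball_of_dense_orbits f hmin hε
  obtain ⟨L, hL⟩ := ENNReal.exists_inv_nat_lt hδ_pos.ne'
  have hL_pos : 0 < L := Nat.pos_of_ne_zero fun h => by simp [h] at hL
  exact ⟨L, hL_pos, fun μ hμ hf _ x => hL.le.trans (hδ μ hμ hf x)⟩
end

section
/- Let ψ be a flow on a metric space M and let v : M → [0,∞) be a continuous function such that dist(ψ_t(x), x) ≤ ∫₀ᵗ v(ψ_s(x)) ds for every x ∈ M and every t ≥ 0. Let p ∈ M and 0 < δ₁ < δ₂ be such that v(y) ≤ (δ₂ − δ₁)/3 for every y in the closed ball of radius δ₂ around p. Then for every x in the closed ball of radius δ₁ around p and every t ∈ [0,2], the point ψ_t(x) lies in the open ball of radius δ₂ around p. In particular, the first hitting time of the sphere of radius δ₂ around p by any point of the ball of radius δ₁ around p is greater than 2. -/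
open MeasureTheory

/-- Let `ψ` be a flow on a metric space `M` and `v : M → [0,∞)` continuous
with `dist (ψ_t x) x ≤ ∫₀ᵗ v (ψ_s x) ds` for `t ≥ 0`.  If `0 < δ₁ < δ₂` and
`v ≤ (δ₂ - δ₁)/3` on the closed ball of radius `δ₂` around `p`, then every point of the
closed ball of radius `δ₁` stays in the open ball of radius `δ₂` for all times in `[0,2]`;
in particular the first hitting time of the sphere of radius `δ₂` by points of the ball of
radius `δ₁` is greater than `2`. -/
theorem flow_stays_in_ball_of_small_speed
    {M : Type*} [MetricSpace M]
    (ψ : ℝ → M → M)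
    (hcont : Continuous fun q : M × ℝ => ψ q.2 q.1)
    (h0 : ∀ x, ψ 0 x = x)
    (hadd : ∀ s t : ℝ, ∀ x, ψ t (ψ s x) = ψ (s + t) x)
    (v : M → ℝ) (hv_cont : Continuous v) (hv_nonneg : ∀ y, 0 ≤ v y)
    (hdist : ∀ x : M, ∀ t : ℝ, 0 ≤ t →
      dist (ψ t x) x ≤ ∫ s in (0 : ℝ)..t, v (ψ s x))
    (p : M) (δ₁ δ₂ : ℝ) (h0δ : 0 < δ₁) (hδ : δ₁ < δ₂)
    (hsmall : ∀ y ∈ Metric.closedBall p δ₂, v y ≤ (δ₂ - δ₁) / 3) :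
    (∀ x ∈ Metric.closedBall p δ₁, ∀ t ∈ Set.Icc (0 : ℝ) 2,
        ψ t x ∈ Metric.ball p δ₂) ∧
    (∀ x ∈ Metric.closedBall p δ₁, ∀ t : ℝ, 0 ≤ t →
        ψ t x ∈ Metric.sphere p δ₂ → 2 < t) := by
  have hc0 : (0:ℝ) ≤ (δ₂ - δ₁) / 3 := by linarith
  have key : ∀ x ∈ Metric.closedBall p δ₁, ∀ t ∈ Set.Icc (0 : ℝ) 2,
      ψ t x ∈ Metric.ball p δ₂ := by
    intro x hx t ht
    have hψx : Continuous fun s : ℝ => ψ s x :=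
      hcont.comp (continuous_const.prodMk continuous_id)
    have hf : Continuous fun s : ℝ => dist (ψ s x) p := hψx.dist continuous_const
    by_contra hcon
    have hcon' : δ₂ ≤ dist (ψ t x) p := not_lt.1 (by simpa [Metric.mem_ball] using hcon)
    set B : Set ℝ := Set.Icc 0 t ∩ {s | δ₂ ≤ dist (ψ s x) p} with hBdef
    have hBne : B.Nonempty := ⟨t, ⟨ht.1, le_refl t⟩, hcon'⟩
    have hBclosed : IsClosed B := isClosed_Icc.inter (isClosed_le continuous_const hf)
    have hbdd : BddBelow B := ⟨0, fun s hs => hs.1.1⟩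
    set t₀ : ℝ := sInf B with ht₀def
    have ht₀B : t₀ ∈ B := hBclosed.csInf_mem hBne hbdd
    have ht₀0 : 0 ≤ t₀ := ht₀B.1.1
    have ht₀t : t₀ ≤ t := ht₀B.1.2
    have hx' : dist x p ≤ δ₁ := Metric.mem_closedBall.1 hx
    have h0notB : (0:ℝ) ∉ B := by
      intro h
      have h2 : δ₂ ≤ dist (ψ 0 x) p := h.2
      rw [h0 x] at h2
      linarith
    have ht₀pos : 0 < t₀ := lt_of_le_of_ne ht₀0 (fun h => h0notB (h ▸ ht₀B))
    have claim : ∀ t' ∈ Set.Ico (0:ℝ) t₀,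
        dist (ψ t' x) p ≤ δ₁ + 2 * ((δ₂ - δ₁) / 3) := by
      intro t' ht'
      have hint : (∫ s in (0:ℝ)..t', v (ψ s x)) ≤ ∫ s in (0:ℝ)..t', ((δ₂ - δ₁) / 3) := by
        apply intervalIntegral.integral_mono_on ht'.1
          ((hv_cont.comp hψx).intervalIntegrable 0 t') (intervalIntegrable_const)
        intro s hs
        apply hsmall
        rw [Metric.mem_closedBall]
        have hsnB : s ∉ B := fun h =>
          absurd (csInf_le hbdd h) (not_le.2 (lt_of_le_of_lt hs.2 ht'.2))
        by_contra hgt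
        exact hsnB ⟨⟨hs.1, le_trans hs.2 (le_trans (le_of_lt ht'.2) ht₀t)⟩,
          le_of_lt (not_le.1 hgt)⟩
      have hconst : (∫ s in (0:ℝ)..t', ((δ₂ - δ₁) / 3)) = t' * ((δ₂ - δ₁) / 3) := by
        simp only [intervalIntegral.integral_const, smul_eq_mul, sub_zero]
      have hd := hdist x t' ht'.1
      have ht'2 : t' ≤ 2 := le_trans (le_of_lt ht'.2) (le_trans ht₀t ht.2)
      have h1 : dist (ψ t' x) p ≤ dist (ψ t' x) x + dist x p := dist_triangle _ _ _
      have h2 : t' * ((δ₂ - δ₁) / 3) ≤ 2 * ((δ₂ - δ₁) / 3) :=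
        mul_le_mul_of_nonneg_right ht'2 hc0
      linarith [hint, hconst ▸ hint]
    have htend : Filter.Tendsto (fun s => dist (ψ s x) p) (nhdsWithin t₀ (Set.Iio t₀))
        (nhds (dist (ψ t₀ x) p)) := (hf.tendsto t₀).mono_left nhdsWithin_le_nhds
    have hev : ∀ᶠ s in nhdsWithin t₀ (Set.Iio t₀),
        dist (ψ s x) p ≤ δ₁ + 2 * ((δ₂ - δ₁) / 3) := by
      have h1 : ∀ᶠ s in nhdsWithin t₀ (Set.Iio t₀), 0 < s :=
        eventually_nhdsWithin_of_eventually_nhds (eventually_gt_nhds ht₀pos)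
      have h2 : ∀ᶠ s in nhdsWithin t₀ (Set.Iio t₀), s ∈ Set.Iio t₀ :=
        eventually_mem_nhdsWithin
      filter_upwards [h1, h2] with s hs1 hs2
      exact claim s ⟨le_of_lt hs1, hs2⟩
    have hlim : dist (ψ t₀ x) p ≤ δ₁ + 2 * ((δ₂ - δ₁) / 3) := le_of_tendsto htend hev
    have hge : δ₂ ≤ dist (ψ t₀ x) p := ht₀B.2
    linarith
  refine ⟨key, ?_⟩
  intro x hx t ht hsph
  by_contra hle
  have ht2 : t ∈ Set.Icc (0:ℝ) 2 := ⟨ht, not_lt.1 hle⟩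
  have := key x hx t ht2
  rw [Metric.mem_ball] at this
  rw [Metric.mem_sphere] at hsph
  linarith
end

section
/- Let φ be a flow on a compact metric space M and let p ∈ M. Suppose that for every x ∈ M, lim_{δ→0} liminf_{t→+∞} (1/t)∫₀ᵗ χ_{B(p,δ)}(φ_s(x)) ds = 1, where B(p,δ) is the open ball of radius δ around p and χ_A denotes the indicator function of a set A. Then every φ-invariant Borel probability measure on M equals the Dirac measure δ_p; in particular δ_p is the unique φ-invariant ergodic Borel probability measure. -/
/-!
For an invariant measure `μ`, Fubini and invariance give `∫ x, A_t(x) dμ = μ(B(p, δ))` for the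
time averages `A_t(x) = (1/t) ∫₀ᵗ χ_{B(p,δ)}(φ_s x) ds`. Since `A_t(x) ≤ 1` and `A_t(x)`
grows with `δ`, the hypothesis forces `A_t(x) → 1` for every fixed `δ > 0`; dominated
convergence then gives `μ(B(p, δ)) = 1` for all `δ > 0`, so `μ` is concentrated at `p`.
-/

open MeasureTheory

open Filter Topology Metric Set

lemma abs_indicator_one_le {M : Type*} (s : Set M) (y : M) :
    |s.indicator (fun _ => (1 : ℝ)) y| ≤ 1 := by
  by_cases hy : y ∈ s <;> simp [hy]

namespace Flow

variable {M : Type*} {φ : ℝ → M → M} {g : M → ℝ} {C : ℝ}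

noncomputable def timeAverage (φ : ℝ → M → M) (g : M → ℝ) (x : M) (t : ℝ) : ℝ :=
  1 / t * ∫ s in (0 : ℝ)..t, g (φ s x)

lemma abs_timeAverage_le (hg : ∀ y, |g y| ≤ C) (x : M) {t : ℝ} (ht : 0 < t) :
    |timeAverage φ g x t| ≤ C := by
  have hint : ‖∫ s in (0 : ℝ)..t, g (φ s x)‖ ≤ C * |t - 0| :=
    intervalIntegral.norm_integral_le_of_norm_le_const fun _ _ => hg _
  rw [sub_zero, abs_of_pos ht, Real.norm_eq_abs] at hint
  rw [timeAverage, abs_mul, abs_of_pos (one_div_pos.2 ht)]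
  calc 1 / t * |∫ s in (0 : ℝ)..t, g (φ s x)| ≤ 1 / t * (C * t) := by gcongr
    _ = C := by field_simp

lemma eventually_abs_timeAverage_le (hg : ∀ y, |g y| ≤ C) (x : M) :
    ∀ᶠ t in atTop, |timeAverage φ g x t| ≤ C :=
  (eventually_gt_atTop 0).mono fun _ ht => abs_timeAverage_le hg x ht

lemma timeAverage_mono {h : M → ℝ} (hgh : g ≤ h) {x : M} {t : ℝ} (ht : 0 ≤ t)
    (hg : IntervalIntegrable (fun s => g (φ s x)) volume 0 t)
    (hh : IntervalIntegrable (fun s => h (φ s x)) volume 0 t) :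
    timeAverage φ g x t ≤ timeAverage φ h x t :=
  mul_le_mul_of_nonneg_left (intervalIntegral.integral_mono_on ht hg hh fun _ _ => hgh _)
    (by positivity)

variable [MeasurableSpace M]

lemma intervalIntegrable_comp_flow (hφ : Measurable fun q : M × ℝ => φ q.2 q.1)
    (hg : Measurable g) (hgC : ∀ y, |g y| ≤ C) (x : M) (a b : ℝ) :
    IntervalIntegrable (fun s => g (φ s x)) volume a b :=
  (intervalIntegrable_const (c := C)).mono_fun'
    (hg.comp (hφ.comp (measurable_const.prodMk measurable_id))).aestronglyMeasurable
    (Eventually.of_forall fun _ => hgC _)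

lemma integrable_comp_flow_prod (hφ : Measurable fun q : M × ℝ => φ q.2 q.1)
    (hg : Measurable g) (hgC : ∀ y, |g y| ≤ C) (μ : Measure M) [IsFiniteMeasure μ]
    {s : Set ℝ} (hs : volume s < ⊤) :
    Integrable (Function.uncurry fun x t => g (φ t x)) (μ.prod (volume.restrict s)) :=
  have : IsFiniteMeasure (volume.restrict s) := isFiniteMeasure_restrict.2 hs.ne
  (integrable_const C).mono' (hg.comp hφ).aestronglyMeasurable
    (Eventually.of_forall fun _ => hgC _)

lemma stronglyMeasurable_timeAverage (hφ : Measurable fun q : M × ℝ => φ q.2 q.1)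
    (hg : Measurable g) (t : ℝ) : StronglyMeasurable fun x => timeAverage φ g x t := by
  have hF : StronglyMeasurable (Function.uncurry fun x s => g (φ s x)) :=
    (hg.comp hφ).stronglyMeasurable
  exact ((hF.integral_prod_right (ν := volume.restrict (Ioc 0 t))).sub
    (hF.integral_prod_right (ν := volume.restrict (Ioc t 0)))).const_mul _

lemma integral_timeAverage (hφ : Measurable fun q : M × ℝ => φ q.2 q.1)
    {μ : Measure M} [IsFiniteMeasure μ] (hμ : ∀ t, MeasurePreserving (φ t) μ μ)
    (hg : Measurable g) (hgC : ∀ y, |g y| ≤ C) {t : ℝ} (ht : 0 < t) :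
    ∫ x, timeAverage φ g x t ∂μ = ∫ y, g y ∂μ := by
  have hinv (s : ℝ) : ∫ x, g (φ s x) ∂μ = ∫ y, g y ∂μ := by
    rw [← integral_map (hμ s).measurable.aemeasurable hg.aestronglyMeasurable, (hμ s).map_eq]
  simp_rw [timeAverage, intervalIntegral.integral_of_le ht.le]
  rw [integral_const_mul, integral_integral_swap
    (integrable_comp_flow_prod hφ hg hgC μ measure_Ioc_lt_top)]
  simp_rw [hinv]
  rw [setIntegral_const, Real.volume_real_Ioc_of_le ht.le, sub_zero, smul_eq_mul]
  field_simp

lemma integral_eq_of_tendsto_timeAverage (hφ : Measurable fun q : M × ℝ => φ q.2 q.1)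
    {μ : Measure M} [IsProbabilityMeasure μ] (hμ : ∀ t, MeasurePreserving (φ t) μ μ)
    (hg : Measurable g) (hgC : ∀ y, |g y| ≤ C) {c : ℝ}
    (hc : ∀ x, Tendsto (timeAverage φ g x) atTop (𝓝 c)) :
    ∫ y, g y ∂μ = c := by
  have hlim : Tendsto (fun t => ∫ x, timeAverage φ g x t ∂μ) atTop (𝓝 (∫ _, c ∂μ)) :=
    tendsto_integral_filter_of_dominated_convergence (fun _ => C)
      (Eventually.of_forall fun t => (stronglyMeasurable_timeAverage hφ hg t).aestronglyMeasurable)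
      ((eventually_gt_atTop 0).mono fun _ ht =>
        Eventually.of_forall fun x => abs_timeAverage_le hgC x ht)
      (integrable_const C) (Eventually.of_forall hc)
  have hconst :
      (fun t => ∫ x, timeAverage φ g x t ∂μ) =ᶠ[atTop] fun _ => ∫ y, g y ∂μ :=
    (eventually_gt_atTop 0).mono fun _ ht => integral_timeAverage hφ hμ hg hgC ht
  simpa using tendsto_nhds_unique (tendsto_const_nhds.congr' hconst.symm) hlim

end Flow

namespace Flow

variable {M : Type*} [PseudoMetricSpace M] [MeasurableSpace M] [OpensMeasurableSpace M]
  {φ : ℝ → M → M} {p x : M}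

lemma timeAverage_indicator_ball_mono (hφ : Measurable fun q : M × ℝ => φ q.2 q.1)
    {δ δ' : ℝ} (hδ : δ' ≤ δ) (x : M) {t : ℝ} (ht : 0 ≤ t) :
    timeAverage φ ((ball p δ').indicator fun _ => (1 : ℝ)) x t ≤
      timeAverage φ ((ball p δ).indicator fun _ => (1 : ℝ)) x t :=
  timeAverage_mono (indicator_le_indicator_of_subset (ball_subset_ball hδ) fun _ => zero_le_one) ht
    (intervalIntegrable_comp_flow hφ (measurable_const.indicator measurableSet_ball)
      (abs_indicator_one_le <| ball p δ') x 0 t)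
    (intervalIntegrable_comp_flow hφ (measurable_const.indicator measurableSet_ball)
      (abs_indicator_one_le <| ball p δ) x 0 t)

lemma le_liminf_timeAverage_indicator_ball (hφ : Measurable fun q : M × ℝ => φ q.2 q.1)
    (hx : Tendsto
      (fun δ => liminf (timeAverage φ ((ball p δ).indicator fun _ => (1 : ℝ)) x) atTop)
      (𝓝[>] 0) (𝓝 1)) {δ : ℝ} (hδ : 0 < δ) :
    1 ≤ liminf (timeAverage φ ((ball p δ).indicator fun _ => (1 : ℝ)) x) atTop := by
  refine le_of_tendsto hx ?_
  filter_upwards [Ioo_mem_nhdsGT hδ] with δ' hδ'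
  have hbdd := fun r =>
    eventually_abs_timeAverage_le (φ := φ) (abs_indicator_one_le <| ball p r) x
  exact liminf_le_liminf
    ((eventually_gt_atTop 0).mono fun _ ht => timeAverage_indicator_ball_mono hφ hδ'.2.le x ht.le)
    (isBoundedUnder_of_eventually_ge ((hbdd δ').mono fun _ h => (abs_le.1 h).1))
    (isCoboundedUnder_ge_of_eventually_le _ ((hbdd δ).mono fun _ h => (abs_le.1 h).2))

lemma tendsto_timeAverage_indicator_ball (hφ : Measurable fun q : M × ℝ => φ q.2 q.1)
    (hx : Tendsto
      (fun δ => liminf (timeAverage φ ((ball p δ).indicator fun _ => (1 : ℝ)) x) atTop)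
      (𝓝[>] 0) (𝓝 1)) {δ : ℝ} (hδ : 0 < δ) :
    Tendsto (timeAverage φ ((ball p δ).indicator fun _ => (1 : ℝ)) x) atTop (𝓝 1) := by
  have hbdd := eventually_abs_timeAverage_le (φ := φ) (abs_indicator_one_le <| ball p δ) x
  have hlow := hbdd.mono fun _ h => (abs_le.1 h).1
  have hup := hbdd.mono fun _ h => (abs_le.1 h).2
  exact tendsto_of_le_liminf_of_limsup_le (le_liminf_timeAverage_indicator_ball hφ hx hδ)
    (limsup_le_of_le (isCoboundedUnder_le_of_eventually_le _ hlow) hup)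
    (isBoundedUnder_of_eventually_le hup) (isBoundedUnder_of_eventually_ge hlow)

end Flow

lemma MeasureTheory.Measure.eq_dirac_of_ae_eq {M : Type*} [MeasurableSpace M] {μ : Measure M}
    [IsProbabilityMeasure μ] {p : M} (h : ∀ᵐ x ∂μ, x = p) : μ = Measure.dirac p := by
  calc μ = μ.map id := Measure.map_id.symm
    _ = μ.map fun _ => p := Measure.map_congr h
    _ = Measure.dirac p := by rw [Measure.map_const, measure_univ, one_smul]

lemma ae_eq_of_forall_ae_mem_ball {M : Type*} [MetricSpace M] [MeasurableSpace M] {μ : Measure M}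
    {p : M} (h : ∀ δ > 0, ∀ᵐ x ∂μ, x ∈ ball p δ) : ∀ᵐ x ∂μ, x = p := by
  filter_upwards [ae_all_iff.2 fun n : ℕ => h (1 / (n + 1)) (by positivity)] with x hx
  refine eq_of_forall_dist_le fun ε hε => ?_
  obtain ⟨n, hn⟩ := exists_nat_one_div_lt hε
  exact (mem_ball.1 (hx n)).le.trans hn.le

theorem invariant_measure_eq_dirac_of_attracting_point_general
    {M : Type*} [MetricSpace M] [MeasurableSpace M] [BorelSpace M]
    (φ : ℝ → M → M)
    (hcont : Continuous fun q : M × ℝ => φ q.2 q.1)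
    (p : M)
    (hattract : ∀ x : M,
      Filter.Tendsto
        (fun δ : ℝ => Filter.liminf
          (fun t : ℝ => (1 / t) *
            ∫ s in (0 : ℝ)..t, (Metric.ball p δ).indicator (fun _ => (1 : ℝ)) (φ s x))
          Filter.atTop)
        (nhdsWithin 0 (Set.Ioi 0)) (nhds 1)) :
    ∀ μ : Measure M, IsProbabilityMeasure μ →
      (∀ t : ℝ, MeasurePreserving (φ t) μ μ) →
      μ = Measure.dirac p := by
  intro μ _ hμ
  have hφ : Measurable fun q : M × ℝ => φ q.2 q.1 := hcont.measurable
  refine Measure.eq_dirac_of_ae_eq (ae_eq_of_forall_ae_mem_ball fun δ hδ => ?_)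
  have hball : ∫ y, (ball p δ).indicator (fun _ => (1 : ℝ)) y ∂μ = 1 :=
    Flow.integral_eq_of_tendsto_timeAverage hφ hμ (measurable_const.indicator measurableSet_ball)
      (abs_indicator_one_le _) fun x => Flow.tendsto_timeAverage_indicator_ball hφ (hattract x) hδ
  rw [integral_indicator_const _ measurableSet_ball, smul_eq_mul, mul_one, measureReal_def,
    ENNReal.toReal_eq_one_iff] at hball
  exact (mem_ae_iff_prob_eq_one measurableSet_ball).2 hball

/-- Let `φ` be a flow on a compact metric space `M` and `p ∈ M`.  If for
every `x ∈ M` we have `lim_{δ→0⁺} liminf_{t→∞} (1/t)∫₀ᵗ χ_{B(p,δ)}(φ_s x) ds = 1`, then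
every `φ`-invariant Borel probability measure equals the Dirac measure at `p`; in
particular `δ_p` is the unique `φ`-invariant ergodic Borel probability measure. -/
theorem invariant_measure_eq_dirac_of_attracting_point
    {M : Type*} [MetricSpace M] [CompactSpace M] [MeasurableSpace M] [BorelSpace M]
    (φ : ℝ → M → M)
    (hcont : Continuous fun q : M × ℝ => φ q.2 q.1)
    (h0 : ∀ x, φ 0 x = x)
    (hadd : ∀ s t : ℝ, ∀ x, φ t (φ s x) = φ (s + t) x)
    (p : M)
    (hattract : ∀ x : M,
      Filter.Tendsto
        (fun δ : ℝ => Filter.liminf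
          (fun t : ℝ => (1 / t) *
            ∫ s in (0 : ℝ)..t, (Metric.ball p δ).indicator (fun _ => (1 : ℝ)) (φ s x))
          Filter.atTop)
        (nhdsWithin 0 (Set.Ioi 0)) (nhds 1)) :
    ∀ μ : Measure M, IsProbabilityMeasure μ →
      (∀ t : ℝ, MeasurePreserving (φ t) μ μ) →
      μ = Measure.dirac p :=
  invariant_measure_eq_dirac_of_attracting_point_general φ hcont p hattract
end

section
/- Let φ be a flow on a compact metric space M and let C be the closure of the union of the supports of all φ-invariant ergodic Borel probability measures. Then C is an attracting center for φ; that is, for every x ∈ M, lim_{δ→0} liminf_{t→+∞} (1/t)∫₀ᵗ χ_{B(C,δ)}(φ_s(x)) ds = 1, where B(C,δ) = {y ∈ M : dist(y,C) < δ} and χ_A denotes the indicator function of a set A. -/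
open MeasureTheory

/-- The (topological) support of a measure: the set of points all of whose open
neighbourhoods have positive measure. -/
def measureSupport {M : Type*} [TopologicalSpace M] [MeasurableSpace M]
    (μ : Measure M) : Set M :=
  {x : M | ∀ U : Set M, IsOpen U → x ∈ U → 0 < μ U}

/-!
The time averages of continuous functions along the orbit of `x` are states on `C(M, ℝ)`. By
Banach–Alaoglu they have weak-* cluster points as `t → ∞`, and every such cluster point is
invariant, since shifting time by `r` changes an average over `[0, t]` by `O(|r| / t)`. By
Krein–Milman every invariant state lies in the closed convex hull of the extreme ones, and by the
Riesz–Markov–Kakutani theorem an extreme invariant state is integration against an ergodic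
measure, which lives on the closed set `C`. So a continuous `g` vanishing on `C` and equal to `1`
off the `δ`-neighbourhood of `C` has time averages tending to `0`, and the proportion of time the
orbit spends in that neighbourhood tends to `1`.
-/

open Filter Topology Set ProbabilityTheory
open scoped CompactlySupported

theorem MeasureTheory.MeasurePreserving.cond {Ω : Type*} [MeasurableSpace Ω] {μ : Measure Ω}
    {T : Ω → Ω} (hT : MeasurePreserving T μ μ) {s : Set Ω} (hs : MeasurableSet s)
    (hinv : T ⁻¹' s = s) : MeasurePreserving T μ[|s] μ[|s] := by
  have := (hT.restrict_preimage hs).smul_measure (μ s)⁻¹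
  rwa [hinv] at this

theorem ProbabilityTheory.measureReal_mul_integral_cond {Ω : Type*} [MeasurableSpace Ω]
    {μ : Measure Ω} [IsFiniteMeasure μ] {s : Set Ω} (hs : μ s ≠ 0) (f : Ω → ℝ) :
    μ.real s * ∫ x, f x ∂μ[|s] = ∫ x in s, f x ∂μ := by
  rw [cond, integral_smul_measure, smul_eq_mul, ← mul_assoc, ENNReal.toReal_inv, measureReal_def,
    mul_inv_cancel₀ (ENNReal.toReal_ne_zero.2 ⟨hs, measure_ne_top μ s⟩), one_mul]

theorem measurePreserving_of_integral_comp_eq {M : Type*} [TopologicalSpace M]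
    [HasOuterApproxClosed M] [MeasurableSpace M] [BorelSpace M] {μ : Measure M}
    [IsFiniteMeasure μ] {T : M → M} (hT : Continuous T)
    (h : ∀ f : C(M, ℝ), ∫ y, f (T y) ∂μ = ∫ y, f y ∂μ) :
    MeasurePreserving T μ μ :=
  ⟨hT.measurable, ext_of_forall_integral_eq_of_IsFiniteMeasure fun f => by
    rw [integral_map hT.aemeasurable f.continuous.aestronglyMeasurable]
    exact h f.toContinuousMap⟩

theorem measureSupport_eq_support {M : Type*} [TopologicalSpace M] [MeasurableSpace M]
    (μ : Measure M) : measureSupport μ = μ.support := by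
  ext x
  rw [Measure.support_eq_forall_isOpen]
  exact forall_congr' fun _ => forall_comm

theorem abs_intervalIntegral_comp_add_right_sub_le {h : ℝ → ℝ} (hh : Continuous h) {C : ℝ}
    (hC : ∀ s, |h s| ≤ C) (t r : ℝ) :
    |(∫ s in 0..t, h (s + r)) - ∫ s in 0..t, h s| ≤ 2 * C * |r| := by
  rw [intervalIntegral.integral_comp_add_right, zero_add,
    intervalIntegral.integral_interval_sub_interval_comm' (hh.intervalIntegrable _ _)
      (hh.intervalIntegrable _ _) (hh.intervalIntegrable _ _)]
  have h₁ := intervalIntegral.norm_integral_le_of_norm_le_const (a := t) (b := t + r)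
    fun s _ => (Real.norm_eq_abs (h s)).trans_le (hC s)
  have h₂ := intervalIntegral.norm_integral_le_of_norm_le_const (a := 0) (b := r)
    fun s _ => (Real.norm_eq_abs (h s)).trans_le (hC s)
  simp only [Real.norm_eq_abs, add_sub_cancel_left, sub_zero] at h₁ h₂
  linarith [abs_sub (∫ s in t..t + r, h s) (∫ s in 0..r, h s)]

theorem continuous_orbit {M : Type*} [TopologicalSpace M] {φ : ℝ → M → M}
    (hcont : Continuous fun q : M × ℝ => φ q.2 q.1) (x : M) : Continuous fun s => φ s x :=
  hcont.comp (continuous_const.prodMk continuous_id)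

section States

variable (M : Type*) [TopologicalSpace M]

def stateSpace : Set (WeakDual ℝ C(M, ℝ)) :=
  {Λ | Λ 1 = 1 ∧ ∀ f, 0 ≤ f → 0 ≤ Λ f}

variable {M}

def invariantStates (φ : ℝ → M → M) : Set (WeakDual ℝ C(M, ℝ)) :=
  stateSpace M ∩ {Λ | ∀ t (f g : C(M, ℝ)), ⇑g = f ∘ φ t → Λ g = Λ f}

theorem isClosed_stateSpace : IsClosed (stateSpace M) := by
  simp only [stateSpace, ofPred_and, ofPred_forall]
  exact (isClosed_eq (WeakDual.eval_continuous 1) continuous_const).inter <|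
    isClosed_iInter fun f => isClosed_iInter fun _ =>
      isClosed_le continuous_const (WeakDual.eval_continuous f)

theorem abs_apply_le_of_mem_stateSpace [CompactSpace M] {Λ : WeakDual ℝ C(M, ℝ)}
    (hΛ : Λ ∈ stateSpace M) (f : C(M, ℝ)) : |Λ f| ≤ ‖f‖ := by
  have hbound (y : M) : |f y| ≤ ‖f‖ := by simpa using f.norm_coe_le_norm y
  have hupper := hΛ.2 (‖f‖ • 1 - f) fun y => by
    simpa using (abs_le.1 (hbound y)).2
  have hlower := hΛ.2 (‖f‖ • 1 + f) fun y => by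
    simpa [neg_le_iff_add_nonneg'] using (abs_le.1 (hbound y)).1
  simp only [map_sub, map_add, map_smul, hΛ.1, smul_eq_mul, mul_one] at hupper hlower
  exact abs_le.2 ⟨by linarith, by linarith⟩

theorem isCompact_stateSpace [CompactSpace M] : IsCompact (stateSpace M) := by
  refine (WeakDual.isCompact_closedBall 0 1).of_isClosed_subset isClosed_stateSpace
    fun Λ hΛ => ?_
  simp only [mem_preimage, mem_closedBall_zero_iff]
  exact ContinuousLinearMap.opNorm_le_bound _ zero_le_one fun f => by
    simpa using abs_apply_le_of_mem_stateSpace hΛ f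

theorem convex_stateSpace : Convex ℝ (stateSpace M) := by
  rintro Λ₁ ⟨hone₁, hpos₁⟩ Λ₂ ⟨hone₂, hpos₂⟩ a b ha hb hab
  refine ⟨?_, fun f hf => ?_⟩
  · change a * Λ₁ 1 + b * Λ₂ 1 = 1
    rw [hone₁, hone₂, mul_one, mul_one, hab]
  · change 0 ≤ a * Λ₁ f + b * Λ₂ f
    have := hpos₁ f hf
    have := hpos₂ f hf
    positivity

variable (φ : ℝ → M → M)

theorem isClosed_invariantStates : IsClosed (invariantStates φ) := by
  refine isClosed_stateSpace.inter ?_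
  simp only [ofPred_forall]
  exact isClosed_iInter fun t => isClosed_iInter fun f => isClosed_iInter fun g =>
    isClosed_iInter fun _ =>
      isClosed_eq (WeakDual.eval_continuous g) (WeakDual.eval_continuous f)

theorem isCompact_invariantStates [CompactSpace M] : IsCompact (invariantStates φ) :=
  isCompact_stateSpace.of_isClosed_subset (isClosed_invariantStates φ) inter_subset_left

theorem convex_invariantStates : Convex ℝ (invariantStates φ) := by
  rintro Λ₁ ⟨hs₁, hinv₁⟩ Λ₂ ⟨hs₂, hinv₂⟩ a b ha hb hab
  refine ⟨convex_stateSpace hs₁ hs₂ ha hb hab, fun t f g hg => ?_⟩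
  change a * Λ₁ g + b * Λ₂ g = a * Λ₁ f + b * Λ₂ f
  rw [hinv₁ t f g hg, hinv₂ t f g hg]

end States

section Integration

variable {M : Type*} [TopologicalSpace M] [CompactSpace M] [MeasurableSpace M]
  [OpensMeasurableSpace M]

theorem ContinuousMap.integrable_of_compactSpace (f : C(M, ℝ)) (μ : Measure M)
    [IsFiniteMeasure μ] : Integrable f μ :=
  f.continuous.integrable_of_hasCompactSupport (.of_compactSpace _)

noncomputable def integralFunctional (μ : Measure M) [IsFiniteMeasure μ] :
    WeakDual ℝ C(M, ℝ) :=
  LinearMap.mkContinuous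
    { toFun f := ∫ y, f y ∂μ
      map_add' f g :=
        integral_add (f.integrable_of_compactSpace μ) (g.integrable_of_compactSpace μ)
      map_smul' c f := integral_smul c _ }
    (μ.real univ) fun f => by
      rw [mul_comm]
      exact norm_integral_le_of_norm_le_const (ae_of_all _ f.norm_coe_le_norm)

@[simp]
theorem integralFunctional_apply (μ : Measure M) [IsFiniteMeasure μ] (f : C(M, ℝ)) :
    integralFunctional μ f = ∫ y, f y ∂μ :=
  rfl

theorem integralFunctional_mem_stateSpace (μ : Measure M) [IsProbabilityMeasure μ] :
    integralFunctional μ ∈ stateSpace M :=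
  ⟨by simp, fun f hf => integral_nonneg hf⟩

theorem integralFunctional_mem_invariantStates {φ : ℝ → M → M} (μ : Measure M)
    [IsProbabilityMeasure μ] (hμ : ∀ t, MeasurePreserving (φ t) μ μ) :
    integralFunctional μ ∈ invariantStates φ := by
  refine ⟨integralFunctional_mem_stateSpace μ, fun t f g hg => ?_⟩
  simp only [integralFunctional_apply, hg, Function.comp_apply]
  conv_rhs => rw [← (hμ t).map_eq]
  rw [integral_map (hμ t).aemeasurable f.continuous.aestronglyMeasurable]

end Integration

theorem exists_isProbabilityMeasure_integral_eq {M : Type*} [TopologicalSpace M] [T2Space M]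
    [CompactSpace M] [MeasurableSpace M] [BorelSpace M] {Λ : WeakDual ℝ C(M, ℝ)}
    (hΛ : Λ ∈ stateSpace M) :
    ∃ μ : Measure M, IsProbabilityMeasure μ ∧ ∀ f : C(M, ℝ), ∫ y, f y ∂μ = Λ f := by
  let Λc : C_c(M, ℝ) →ₚ[ℝ] ℝ := PositiveLinearMap.mk₀
    { toFun f := Λ f.toContinuousMap
      map_add' f g := map_add Λ _ _
      map_smul' c f := map_smul Λ c _ }
    fun f hf => hΛ.2 _ hf
  have hrep (f : C(M, ℝ)) : ∫ y, f y ∂(RealRMK.rieszMeasure Λc) = Λ f :=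
    RealRMK.integral_rieszMeasure Λc (CompactlySupportedContinuousMap.continuousMapEquiv f)
  refine ⟨RealRMK.rieszMeasure Λc, ⟨?_⟩, hrep⟩
  have := hrep 1
  simp only [ContinuousMap.one_apply, integral_const, smul_eq_mul, mul_one, hΛ.1] at this
  rwa [measureReal_def, ENNReal.toReal_eq_one_iff] at this

def ergodicMeasures {M : Type*} [MeasurableSpace M] (φ : ℝ → M → M) : Set (Measure M) :=
  {μ | IsProbabilityMeasure μ ∧ (∀ t : ℝ, MeasurePreserving (φ t) μ μ) ∧
    (∀ B : Set M, MeasurableSet B → (∀ t : ℝ, φ t ⁻¹' B = B) → μ B = 0 ∨ μ B = 1)}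

section Ergodic

variable {M : Type*} [MetricSpace M] [CompactSpace M] [MeasurableSpace M] [BorelSpace M]

theorem eq_of_integralFunctional_eq {μ ν : Measure M} [IsFiniteMeasure μ] [IsFiniteMeasure ν]
    (h : integralFunctional μ = integralFunctional ν) : μ = ν :=
  ext_of_forall_integral_eq_of_IsFiniteMeasure fun f => congr($h f.toContinuousMap)

theorem integralFunctional_eq_add_cond {μ : Measure M} [IsFiniteMeasure μ] {B : Set M}
    (hB : MeasurableSet B) (h₁ : μ B ≠ 0) (h₂ : μ Bᶜ ≠ 0) :
    integralFunctional μ =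
      μ.real B • integralFunctional μ[|B] + μ.real Bᶜ • integralFunctional μ[|Bᶜ] := by
  refine DFunLike.ext _ _ fun f => ?_
  change ∫ y, f y ∂μ = μ.real B * ∫ y, f y ∂μ[|B] + μ.real Bᶜ * ∫ y, f y ∂μ[|Bᶜ]
  rw [measureReal_mul_integral_cond h₁, measureReal_mul_integral_cond h₂,
    integral_add_compl hB (f.integrable_of_compactSpace μ)]

/-- An invariant set `B` of intermediate measure would exhibit `μ` as a proper convex combination of
the invariant measures `μ[|B]` and `μ[|Bᶜ]`. -/
theorem measure_eq_zero_or_one_of_mem_extremePoints {φ : ℝ → M → M} {μ : Measure M}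
    [IsProbabilityMeasure μ] (hμ : ∀ t, MeasurePreserving (φ t) μ μ)
    (hext : integralFunctional μ ∈ extremePoints ℝ (invariantStates φ))
    {B : Set M} (hB : MeasurableSet B) (hinv : ∀ t, φ t ⁻¹' B = B) : μ B = 0 ∨ μ B = 1 := by
  by_contra! h
  have hBc : μ Bᶜ ≠ 0 := by rw [Ne, prob_compl_eq_zero_iff hB]; exact h.2
  have := cond_isProbabilityMeasure (μ := μ) h.1
  have := cond_isProbabilityMeasure hBc
  have h₁ := integralFunctional_mem_invariantStates μ[|B] fun t => (hμ t).cond hB (hinv t)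
  have h₂ := integralFunctional_mem_invariantStates μ[|Bᶜ] fun t =>
    (hμ t).cond hB.compl (by rw [preimage_compl, hinv])
  have hseg : integralFunctional μ ∈
      openSegment ℝ (integralFunctional μ[|B]) (integralFunctional μ[|Bᶜ]) :=
    ⟨μ.real B, μ.real Bᶜ, ENNReal.toReal_pos h.1 (measure_ne_top μ B),
      ENNReal.toReal_pos hBc (measure_ne_top μ Bᶜ), probReal_add_probReal_compl hB,
      (integralFunctional_eq_add_cond hB h.1 hBc).symm⟩
  have heq₁ := hext.2 h₁ h₂ hseg
  have heq₂ := hext.2 h₂ h₁ (openSegment_symm ℝ (integralFunctional μ[|B]) _ ▸ hseg)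
  have hcond : μ[|B] = μ[|Bᶜ] := eq_of_integralFunctional_eq (heq₁.trans heq₂.symm)
  obtain ⟨x, hxB, hxBc⟩ := ((ae_cond_mem hB).and (hcond ▸ ae_cond_mem hB.compl)).exists
  exact hxBc hxB

theorem exists_mem_ergodicMeasures_of_mem_extremePoints {φ : ℝ → M → M}
    (hcont : Continuous fun q : M × ℝ => φ q.2 q.1) {Λ : WeakDual ℝ C(M, ℝ)}
    (hΛ : Λ ∈ extremePoints ℝ (invariantStates φ)) :
    ∃ μ ∈ ergodicMeasures φ, ∀ f : C(M, ℝ), ∫ y, f y ∂μ = Λ f := by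
  obtain ⟨μ, hprob, hrep⟩ := exists_isProbabilityMeasure_integral_eq hΛ.1.1
  have hφ (t : ℝ) : Continuous (φ t) := hcont.comp (continuous_id.prodMk continuous_const)
  have hμ (t : ℝ) : MeasurePreserving (φ t) μ μ :=
    measurePreserving_of_integral_comp_eq (hφ t) fun f =>
      (hrep (f.comp ⟨φ t, hφ t⟩)).trans ((hΛ.1.2 t f _ rfl).trans (hrep f).symm)
  have hΛμ : integralFunctional μ = Λ := DFunLike.ext _ _ hrep
  exact ⟨μ, ⟨hprob, hμ, fun B hB hinv =>
    measure_eq_zero_or_one_of_mem_extremePoints hμ (hΛμ ▸ hΛ) hB hinv⟩, hrep⟩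

theorem apply_eq_zero_of_eqOn_zero {φ : ℝ → M → M}
    (hcont : Continuous fun q : M × ℝ => φ q.2 q.1) {C : Set M}
    (hC : ∀ μ ∈ ergodicMeasures φ, measureSupport μ ⊆ C) {g : C(M, ℝ)} (hg : EqOn g 0 C)
    {Λ : WeakDual ℝ C(M, ℝ)} (hΛ : Λ ∈ invariantStates φ) : Λ g = 0 := by
  have : LocallyConvexSpace ℝ (WeakDual ℝ C(M, ℝ)) := WeakBilin.locallyConvexSpace
  have hext : extremePoints ℝ (invariantStates φ) ⊆ {Λ | Λ g = 0} := fun Λ hΛ => by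
    obtain ⟨μ, hμ, hrep⟩ := exists_mem_ergodicMeasures_of_mem_extremePoints hcont hΛ
    rw [mem_ofPred_eq, ← hrep]
    refine integral_eq_zero_of_ae ?_
    filter_upwards [Measure.support_mem_ae] with y hy
    exact hg (hC μ hμ (by rwa [measureSupport_eq_support]))
  rw [← closure_convexHull_extremePoints (isCompact_invariantStates φ)
    (convex_invariantStates φ)] at hΛ
  have hconvex : Convex ℝ {Λ : WeakDual ℝ C(M, ℝ) | Λ g = 0} :=
    convex_hyperplane ⟨fun _ _ => rfl, fun _ _ => rfl⟩ 0
  exact closure_minimal (convexHull_min hext hconvex)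
    (isClosed_eq (WeakDual.eval_continuous g) continuous_const) hΛ

end Ergodic

section OrbitMeasure

variable {M : Type*} [TopologicalSpace M] [MeasurableSpace M] [BorelSpace M]

/-- Normalized Lebesgue measure on `(0, t]` pushed forward along the orbit of `x`; it is the zero
measure when `t ≤ 0`. -/
noncomputable def orbitMeasure (φ : ℝ → M → M) (x : M) (t : ℝ) : Measure M :=
  volume[|Ioc 0 t].map fun s => φ s x

variable {φ : ℝ → M → M}

instance (x : M) (t : ℝ) : IsZeroOrProbabilityMeasure (orbitMeasure φ x t) := by
  unfold orbitMeasure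
  infer_instance

theorem isProbabilityMeasure_orbitMeasure (hcont : Continuous fun q : M × ℝ => φ q.2 q.1)
    (x : M) {t : ℝ} (ht : 0 < t) : IsProbabilityMeasure (orbitMeasure φ x t) := by
  have := cond_isProbabilityMeasure_of_finite (μ := volume) (s := Ioc 0 t)
    (by simpa using ht) (by simp)
  exact Measure.isProbabilityMeasure_map (continuous_orbit hcont x).aemeasurable

theorem integral_orbitMeasure (hcont : Continuous fun q : M × ℝ => φ q.2 q.1) (x : M) {t : ℝ}
    (ht : 0 < t) {F : M → ℝ} (hF : Measurable F) :
    ∫ y, F y ∂orbitMeasure φ x t = t⁻¹ * ∫ s in 0..t, F (φ s x) := by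
  rw [orbitMeasure, integral_map (continuous_orbit hcont x).aemeasurable hF.aestronglyMeasurable,
    ProbabilityTheory.cond, integral_smul_measure, intervalIntegral.integral_of_le ht.le,
    Real.volume_Ioc, sub_zero, ENNReal.toReal_inv, ENNReal.toReal_ofReal ht.le, smul_eq_mul]

end OrbitMeasure

section TimeAverages

variable {M : Type*} [TopologicalSpace M] [CompactSpace M] [MeasurableSpace M] [BorelSpace M]
  {φ : ℝ → M → M}

theorem tendsto_integral_orbitMeasure_comp_sub (hcont : Continuous fun q : M × ℝ => φ q.2 q.1)
    (hadd : ∀ s t : ℝ, ∀ x, φ t (φ s x) = φ (s + t) x) (x : M) {r : ℝ} {f g : C(M, ℝ)}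
    (hg : ⇑g = f ∘ φ r) :
    Tendsto (fun t => ∫ y, g y ∂orbitMeasure φ x t - ∫ y, f y ∂orbitMeasure φ x t) atTop
      (𝓝 0) := by
  refine squeeze_zero_norm' ?_ (by simpa using tendsto_inv_atTop_zero.mul_const (2 * ‖f‖ * |r|))
  filter_upwards [eventually_gt_atTop 0] with t ht
  rw [integral_orbitMeasure hcont x ht g.continuous.measurable,
    integral_orbitMeasure hcont x ht f.continuous.measurable, ← mul_sub, norm_mul,
    Real.norm_eq_abs, Real.norm_eq_abs, abs_inv, abs_of_pos ht]
  refine mul_le_mul_of_nonneg_left ?_ (inv_nonneg.2 ht.le)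
  simp only [hg, Function.comp_apply, hadd]
  exact abs_intervalIntegral_comp_add_right_sub_le (f.continuous.comp (continuous_orbit hcont x))
    (fun s => by simpa using f.norm_coe_le_norm (φ s x)) t r

theorem mem_invariantStates_of_mapClusterPt (hcont : Continuous fun q : M × ℝ => φ q.2 q.1)
    (hadd : ∀ s t : ℝ, ∀ x, φ t (φ s x) = φ (s + t) x) (x : M) {F : Filter ℝ} (hF : F ≤ atTop)
    {Λ : WeakDual ℝ C(M, ℝ)}
    (hΛ : MapClusterPt Λ F fun t => integralFunctional (orbitMeasure φ x t)) :
    Λ ∈ invariantStates φ := by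
  refine ⟨isClosed_stateSpace.mem_of_mapClusterPt hΛ ?_, fun r f g hg => ?_⟩
  · filter_upwards [hF (eventually_gt_atTop 0)] with t ht
    have := isProbabilityMeasure_orbitMeasure hcont x ht
    exact integralFunctional_mem_stateSpace _
  · have hcl := hΛ.continuousAt_comp
      ((WeakDual.eval_continuous g).sub (WeakDual.eval_continuous f)).continuousAt
    exact sub_eq_zero.1 <| eq_of_nhds_neBot <| hcl.clusterPt.mono <|
      (tendsto_integral_orbitMeasure_comp_sub hcont hadd x hg).mono_left hF

theorem eventually_integral_orbitMeasure_lt (hcont : Continuous fun q : M × ℝ => φ q.2 q.1)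
    (hadd : ∀ s t : ℝ, ∀ x, φ t (φ s x) = φ (s + t) x) (x : M) {g : C(M, ℝ)}
    (hg : ∀ Λ ∈ invariantStates φ, Λ g = 0) {ε : ℝ} (hε : 0 < ε) :
    ∀ᶠ t in atTop, ∫ y, g y ∂orbitMeasure φ x t < ε := by
  by_contra h
  simp only [not_eventually, not_lt] at h
  set F := atTop ⊓ 𝓟 {t | ε ≤ ∫ y, g y ∂orbitMeasure φ x t}
  have : F.NeBot := frequently_iff_neBot.1 h
  have hFtop : F ≤ atTop := inf_le_left
  obtain ⟨Λ, -, hΛ⟩ := isCompact_stateSpace.exists_mapClusterPt (f := F)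
    (u := fun t => integralFunctional (orbitMeasure φ x t)) <| tendsto_principal.2 <| by
      filter_upwards [hFtop (eventually_gt_atTop 0)] with t ht
      have := isProbabilityMeasure_orbitMeasure hcont x ht
      exact integralFunctional_mem_stateSpace _
  have hεΛ : ε ≤ Λ g := (isClosed_Ici.preimage (WeakDual.eval_continuous g)).mem_of_mapClusterPt
    hΛ (mem_inf_of_right (mem_principal_self _))
  linarith [hg Λ (mem_invariantStates_of_mapClusterPt hcont hadd x hFtop hΛ)]

end TimeAverages

theorem tendsto_orbitMeasure_real_of_subset_isOpen {M : Type*} [MetricSpace M] [CompactSpace M]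
    [MeasurableSpace M] [BorelSpace M] {φ : ℝ → M → M}
    (hcont : Continuous fun q : M × ℝ => φ q.2 q.1)
    (hadd : ∀ s t : ℝ, ∀ x, φ t (φ s x) = φ (s + t) x) (x : M) {C : Set M} (hCc : IsClosed C)
    (hC : ∀ μ ∈ ergodicMeasures φ, measureSupport μ ⊆ C) {U : Set M} (hU : IsOpen U)
    (hCU : C ⊆ U) : Tendsto (fun t => (orbitMeasure φ x t).real U) atTop (𝓝 1) := by
  obtain ⟨g, hgC, hgU, hg01⟩ := exists_continuous_zero_one_of_isClosed hCc hU.isClosed_compl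
    (disjoint_compl_right_iff_subset.2 hCU)
  have hg : ∀ Λ ∈ invariantStates φ, Λ g = 0 := fun Λ hΛ =>
    apply_eq_zero_of_eqOn_zero hcont hC hgC hΛ
  refine tendsto_order.2 ⟨fun a ha => ?_, fun a ha => ?_⟩
  · filter_upwards [eventually_integral_orbitMeasure_lt hcont hadd x hg (sub_pos.2 ha),
      eventually_gt_atTop 0] with t hgt ht
    have := isProbabilityMeasure_orbitMeasure hcont x ht
    have hcompl : (orbitMeasure φ x t).real Uᶜ ≤ ∫ y, g y ∂orbitMeasure φ x t := by
      rw [← integral_indicator_one hU.measurableSet.compl]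
      refine integral_mono ((integrable_const 1).indicator hU.measurableSet.compl)
        (g.integrable_of_compactSpace _) fun y => ?_
      by_cases hy : y ∈ Uᶜ
      · simp [hy, hgU hy]
      · simp [hy, (hg01 y).1]
    rw [probReal_compl_eq_one_sub hU.measurableSet] at hcompl
    linarith
  · exact .of_forall fun t => measureReal_le_one.trans_lt ha

theorem closure_union_supports_is_attracting_center_general
    {M : Type*} [MetricSpace M] [CompactSpace M] [MeasurableSpace M] [BorelSpace M]
    (φ : ℝ → M → M)
    (hcont : Continuous fun q : M × ℝ => φ q.2 q.1)
    (hadd : ∀ s t : ℝ, ∀ x, φ t (φ s x) = φ (s + t) x) :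
    ∀ x : M,
      Filter.Tendsto
        (fun δ : ℝ => Filter.liminf
          (fun t : ℝ => (1 / t) *
            ∫ s in (0 : ℝ)..t,
              (Metric.thickening δ
                (closure (⋃ μ ∈ {μ : Measure M | IsProbabilityMeasure μ ∧
                    (∀ t : ℝ, MeasurePreserving (φ t) μ μ) ∧
                    (∀ B : Set M, MeasurableSet B → (∀ t : ℝ, φ t ⁻¹' B = B) →
                      μ B = 0 ∨ μ B = 1)},
                  measureSupport μ))).indicator (fun _ => (1 : ℝ)) (φ s x))
          Filter.atTop)
        (nhdsWithin 0 (Set.Ioi 0)) (nhds 1) := by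
  intro x
  set C := closure (⋃ μ ∈ ergodicMeasures φ, measureSupport μ)
  have hsojourn (δ : ℝ) (hδ : 0 < δ) : Tendsto (fun t : ℝ => (1 / t) *
      ∫ s in (0 : ℝ)..t, (Metric.thickening δ C).indicator (fun _ => (1 : ℝ)) (φ s x))
      atTop (𝓝 1) := by
    refine (tendsto_orbitMeasure_real_of_subset_isOpen hcont hadd x isClosed_closure
      (fun μ hμ => (subset_biUnion_of_mem hμ).trans subset_closure) Metric.isOpen_thickening
      (Metric.self_subset_thickening hδ C)).congr' ?_
    filter_upwards [eventually_gt_atTop 0] with t ht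
    rw [← integral_indicator_one Metric.isOpen_thickening.measurableSet,
      integral_orbitMeasure hcont x ht (F := (Metric.thickening δ C).indicator 1)
        (measurable_const.indicator Metric.isOpen_thickening.measurableSet), one_div]
    rfl
  exact tendsto_const_nhds.congr'
    (eventually_nhdsWithin_of_forall fun δ hδ => (hsojourn δ hδ).liminf_eq.symm)

/-- Zhou. For a flow `φ` on a compact metric space, the closure of the
union of the supports of all `φ`-invariant ergodic Borel probability measures is an
attracting center: the mean sojourn time of every orbit in every `δ`-neighbourhood of this
set tends (in the liminf sense, as `δ → 0⁺`) to `1`. -/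
theorem closure_union_supports_is_attracting_center
    {M : Type*} [MetricSpace M] [CompactSpace M] [MeasurableSpace M] [BorelSpace M]
    (φ : ℝ → M → M)
    (hcont : Continuous fun q : M × ℝ => φ q.2 q.1)
    (h0 : ∀ x, φ 0 x = x)
    (hadd : ∀ s t : ℝ, ∀ x, φ t (φ s x) = φ (s + t) x) :
    ∀ x : M,
      Filter.Tendsto
        (fun δ : ℝ => Filter.liminf
          (fun t : ℝ => (1 / t) *
            ∫ s in (0 : ℝ)..t,
              (Metric.thickening δ
                (closure (⋃ μ ∈ {μ : Measure M | IsProbabilityMeasure μ ∧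
                    (∀ t : ℝ, MeasurePreserving (φ t) μ μ) ∧
                    (∀ B : Set M, MeasurableSet B → (∀ t : ℝ, φ t ⁻¹' B = B) →
                      μ B = 0 ∨ μ B = 1)},
                  measureSupport μ))).indicator (fun _ => (1 : ℝ)) (φ s x))
          Filter.atTop)
        (nhdsWithin 0 (Set.Ioi 0)) (nhds 1) :=
  closure_union_supports_is_attracting_center_general φ hcont hadd
end

section
/- Let φ be a flow on a compact metric space M and let C' ⊆ M be a compact set with φ_t(C') = C' for all t ∈ ℝ which is an attracting center for φ, i.e., for every x ∈ M, lim_{δ→0} liminf_{t→+∞} (1/t)∫₀ᵗ χ_{B(C',δ)}(φ_s(x)) ds = 1, where B(C',δ) = {y ∈ M : dist(y,C') < δ} and χ_A is the indicator function of A. Then for every φ-invariant ergodic Borel probability measure μ one has μ(C') = 1 and supp(μ) ⊆ C'; consequently the closure of the union of the supports of all φ-invariant ergodic Borel probability measures is contained in C'. -/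
open MeasureTheory

/-!
By Fubini and the invariance of `μ`, the `μ`-mean of the time-`t` occupation average of a
measurable set `U` along the flow is `μ U`. For `U` the `δ`-thickening of `C'`, these occupation
averages are bounded by `1`, and the attracting hypothesis (together with monotonicity in `δ`)
makes their `liminf` at least `1`, so they tend to `1` at every point; dominated convergence then
gives `μ U = 1`. Letting `δ → 0` yields `μ C' = 1` because `C'` is closed, so the open set `C'ᶜ`
is null and cannot meet the support.
-/

open Filter Topology Set Function

instance isFiniteMeasure_restrict_uIoc (a b : ℝ) : IsFiniteMeasure (volume.restrict (uIoc a b)) :=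
  inferInstanceAs (IsFiniteMeasure (volume.restrict (Ioc _ _)))

section OccupationAverage

variable {M : Type*}

noncomputable def occupationAverage (φ : ℝ → M → M) (U : Set M) (x : M) (t : ℝ) : ℝ :=
  (1 / t) * ∫ s in (0 : ℝ)..t, U.indicator (fun _ => (1 : ℝ)) (φ s x)

def IsAttractingCenter [PseudoMetricSpace M] (φ : ℝ → M → M) (C : Set M) : Prop :=
  ∀ x, Tendsto (fun δ => liminf (occupationAverage φ (Metric.thickening δ C) x) atTop)
    (𝓝[>] 0) (𝓝 1)

theorem abs_occupationAverage_le_one (φ : ℝ → M → M) (U : Set M) (x : M) (t : ℝ) :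
    |occupationAverage φ U x t| ≤ 1 := by
  have hint : ‖∫ s in (0 : ℝ)..t, U.indicator (fun _ => (1 : ℝ)) (φ s x)‖ ≤ 1 * |t - 0| :=
    intervalIntegral.norm_integral_le_of_norm_le_const fun s _ => by
      by_cases h : φ s x ∈ U <;> simp [h]
  rw [one_mul, sub_zero, Real.norm_eq_abs] at hint
  rw [occupationAverage, abs_mul, abs_div, abs_one]
  rcases eq_or_ne t 0 with rfl | ht
  · simp
  · calc 1 / |t| * |∫ s in (0 : ℝ)..t, U.indicator (fun _ => (1 : ℝ)) (φ s x)|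
        ≤ 1 / |t| * |t| := by gcongr
      _ = 1 := one_div_mul_cancel (abs_ne_zero.mpr ht)

theorem intervalIntegrable_indicator_comp [MeasurableSpace M] {f : ℝ → M}
    (hf : Measurable f) {U : Set M} (hU : MeasurableSet U) (a b : ℝ) :
    IntervalIntegrable (fun s => U.indicator (fun _ => (1 : ℝ)) (f s)) volume a b :=
  (intervalIntegrable_const (c := (1 : ℝ))).mono_fun
    ((measurable_const.indicator hU).comp hf).aestronglyMeasurable
    (Eventually.of_forall fun s => by by_cases h : f s ∈ U <;> simp [h])

theorem occupationAverage_mono [MeasurableSpace M] {φ : ℝ → M → M} {x : M}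
    (hx : Measurable (φ · x)) {U V : Set M} (hU : MeasurableSet U) (hV : MeasurableSet V)
    (hUV : U ⊆ V) {t : ℝ} (ht : 0 ≤ t) :
    occupationAverage φ U x t ≤ occupationAverage φ V x t := by
  refine mul_le_mul_of_nonneg_left ?_ (by positivity)
  exact intervalIntegral.integral_mono_on ht (intervalIntegrable_indicator_comp hx hU 0 t)
    (intervalIntegrable_indicator_comp hx hV 0 t)
    fun s _ => indicator_le_indicator_of_subset hUV (fun _ => zero_le_one) _

theorem IsAttractingCenter.tendsto_occupationAverage [PseudoMetricSpace M] [MeasurableSpace M]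
    [OpensMeasurableSpace M] {φ : ℝ → M → M} {C : Set M} (hC : IsAttractingCenter φ C)
    (hφ : Measurable (uncurry φ)) {δ : ℝ} (hδ : 0 < δ) (x : M) :
    Tendsto (occupationAverage φ (Metric.thickening δ C) x) atTop (𝓝 1) := by
  have hbdd_le : ∀ U, IsBoundedUnder (· ≤ ·) atTop (occupationAverage φ U x) := fun U =>
    isBoundedUnder_of ⟨1, fun t => (abs_le.mp (abs_occupationAverage_le_one φ U x t)).2⟩
  have hbdd_ge : ∀ U, IsBoundedUnder (· ≥ ·) atTop (occupationAverage φ U x) := fun U =>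
    isBoundedUnder_of ⟨-1, fun t => (abs_le.mp (abs_occupationAverage_le_one φ U x t)).1⟩
  have hmono : ∀ δ' ∈ Ioc 0 δ, liminf (occupationAverage φ (Metric.thickening δ' C) x) atTop ≤
      liminf (occupationAverage φ (Metric.thickening δ C) x) atTop := fun δ' hδ' =>
    liminf_le_liminf
      ((eventually_ge_atTop 0).mono fun t ht => occupationAverage_mono hφ.of_uncurry_right
        Metric.isOpen_thickening.measurableSet Metric.isOpen_thickening.measurableSet
        (Metric.thickening_mono hδ'.2 C) ht)
      (hbdd_ge _) (hbdd_le _).isCoboundedUnder_ge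
  refine tendsto_of_le_liminf_of_limsup_le ?_ ?_ (hbdd_le _) (hbdd_ge _)
  · exact le_of_tendsto (hC x) (mem_of_superset (Ioc_mem_nhdsGT hδ) hmono)
  · exact limsup_le_of_le (hbdd_ge _).isCoboundedUnder_le
      (Eventually.of_forall fun t => (abs_le.mp (abs_occupationAverage_le_one φ _ x t)).2)

section Invariant

variable [MeasurableSpace M] {φ : ℝ → M → M} {μ : Measure M} {U : Set M}

theorem integrable_indicator_uncurry (hφ : Measurable (uncurry φ)) (hU : MeasurableSet U)
    (ν : Measure ℝ) [IsFiniteMeasure ν] [IsFiniteMeasure μ] :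
    Integrable (uncurry fun s x => U.indicator (fun _ => (1 : ℝ)) (φ s x)) (ν.prod μ) :=
  (integrable_const (1 : ℝ)).indicator (hφ hU)

theorem integrable_occupationAverage (hφ : Measurable (uncurry φ)) (hU : MeasurableSet U)
    [IsFiniteMeasure μ] (t : ℝ) : Integrable (fun x => occupationAverage φ U x t) μ := by
  simp only [occupationAverage, intervalIntegral.intervalIntegral_eq_integral_uIoc, smul_eq_mul]
  have hfubini := (integrable_indicator_uncurry hφ hU (μ := μ)
    (volume.restrict (uIoc 0 t))).integral_prod_right
  exact (hfubini.const_mul _).const_mul _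

theorem integral_occupationAverage (hφ : Measurable (uncurry φ))
    (hμ : ∀ s, MeasurePreserving (φ s) μ μ) (hU : MeasurableSet U) [IsFiniteMeasure μ]
    {t : ℝ} (ht : t ≠ 0) : ∫ x, occupationAverage φ U x t ∂μ = μ.real U := by
  have hspace : ∀ s, ∫ x, U.indicator (fun _ => (1 : ℝ)) (φ s x) ∂μ = μ.real U := fun s => by
    rw [← (hμ s).measureReal_preimage hU.nullMeasurableSet,
      ← integral_indicator_one (hφ.of_uncurry_left hU)]
    rfl
  simp only [occupationAverage]
  rw [integral_const_mul, ← intervalIntegral_integral_swap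
      (integrable_indicator_uncurry hφ hU (volume.restrict (uIoc 0 t))),
    funext hspace, intervalIntegral.integral_const, sub_zero, smul_eq_mul, one_div,
    inv_mul_cancel_left₀ ht]

theorem measure_eq_one_of_tendsto_occupationAverage [IsProbabilityMeasure μ]
    (hφ : Measurable (uncurry φ)) (hμ : ∀ s, MeasurePreserving (φ s) μ μ)
    (hU : MeasurableSet U) (h : ∀ x, Tendsto (occupationAverage φ U x) atTop (𝓝 1)) :
    μ U = 1 := by
  have hlim : Tendsto (fun t => ∫ x, occupationAverage φ U x t ∂μ) atTop (𝓝 (∫ _, 1 ∂μ)) :=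
    tendsto_integral_filter_of_dominated_convergence (fun _ => 1)
      (Eventually.of_forall fun t => (integrable_occupationAverage hφ hU t).aestronglyMeasurable)
      (Eventually.of_forall fun t => ae_of_all _ fun x => abs_occupationAverage_le_one φ U x t)
      (integrable_const 1) (ae_of_all _ h)
  have hconst : (fun t => ∫ x, occupationAverage φ U x t ∂μ) =ᶠ[atTop] fun _ => μ.real U :=
    (eventually_ne_atTop 0).mono fun t ht => integral_occupationAverage hφ hμ hU ht
  rw [integral_const, probReal_univ, smul_eq_mul, mul_one] at hlim
  rw [← ENNReal.toReal_eq_one_iff]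
  exact tendsto_nhds_unique (tendsto_const_nhds.congr' hconst.symm) hlim

end Invariant

theorem IsAttractingCenter.measure_eq_one [MetricSpace M] [MeasurableSpace M] [BorelSpace M]
    {φ : ℝ → M → M} {C : Set M} (hC : IsAttractingCenter φ C) (hCc : IsClosed C)
    (hφ : Measurable (uncurry φ)) {μ : Measure M} [IsProbabilityMeasure μ]
    (hμ : ∀ s, MeasurePreserving (φ s) μ μ) : μ C = 1 := by
  have hthick : ∀ δ > 0, μ (Metric.thickening δ C) = 1 := fun δ hδ =>
    measure_eq_one_of_tendsto_occupationAverage hφ hμ Metric.isOpen_thickening.measurableSet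
      (hC.tendsto_occupationAverage hφ hδ)
  refine tendsto_nhds_unique
    (tendsto_measure_thickening_of_isClosed ⟨1, one_pos, measure_ne_top μ _⟩ hCc) ?_
  exact tendsto_const_nhds.congr'
    (eventually_nhdsWithin_of_forall fun δ hδ => (hthick δ hδ).symm)

theorem measureSupport_subset_of_measure_compl_eq_zero [TopologicalSpace M] [MeasurableSpace M]
    {μ : Measure M} {C : Set M} (hC : IsClosed C) (h : μ Cᶜ = 0) : measureSupport μ ⊆ C :=
  fun x hx => by_contra fun hxC => (hx Cᶜ hC.isOpen_compl hxC).ne' h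

end OccupationAverage

theorem ergodic_measures_supported_in_attracting_center_general
    {M : Type*} [MetricSpace M] [CompactSpace M] [MeasurableSpace M] [BorelSpace M]
    (φ : ℝ → M → M)
    (hcont : Continuous fun q : M × ℝ => φ q.2 q.1)
    (C' : Set M) (hC'comp : IsCompact C')
    (hattract : ∀ x : M,
      Filter.Tendsto
        (fun δ : ℝ => Filter.liminf
          (fun t : ℝ => (1 / t) *
            ∫ s in (0 : ℝ)..t,
              (Metric.thickening δ C').indicator (fun _ => (1 : ℝ)) (φ s x))
          Filter.atTop)
        (nhdsWithin 0 (Set.Ioi 0)) (nhds 1)) :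
    (∀ μ : Measure M, IsProbabilityMeasure μ →
      (∀ t : ℝ, MeasurePreserving (φ t) μ μ) →
      (∀ B : Set M, MeasurableSet B → (∀ t : ℝ, φ t ⁻¹' B = B) → μ B = 0 ∨ μ B = 1) →
      μ C' = 1 ∧ measureSupport μ ⊆ C') ∧
    closure (⋃ μ ∈ {μ : Measure M | IsProbabilityMeasure μ ∧
        (∀ t : ℝ, MeasurePreserving (φ t) μ μ) ∧
        (∀ B : Set M, MeasurableSet B → (∀ t : ℝ, φ t ⁻¹' B = B) → μ B = 0 ∨ μ B = 1)},
      measureSupport μ) ⊆ C' := by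
  have hC : IsAttractingCenter φ C' := hattract
  have hφ : Measurable (uncurry φ) := (hcont.comp continuous_swap).measurable
  have hCc : IsClosed C' := hC'comp.isClosed
  have invariant_supported : ∀ μ : Measure M, IsProbabilityMeasure μ →
      (∀ t, MeasurePreserving (φ t) μ μ) → μ C' = 1 ∧ measureSupport μ ⊆ C' :=
    fun μ _ hμ =>
      have hμC : μ C' = 1 := hC.measure_eq_one hCc hφ hμ
      ⟨hμC, measureSupport_subset_of_measure_compl_eq_zero hCc
        ((prob_compl_eq_zero_iff hCc.measurableSet).mpr hμC)⟩
  refine ⟨fun μ hprob hμ _ => invariant_supported μ hprob hμ, ?_⟩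
  exact closure_minimal (iUnion₂_subset fun μ hμ => (invariant_supported μ hμ.1 hμ.2.1).2) hCc

/-- If `C'` is a compact, flow-invariant attracting center for a flow `φ`
on a compact metric space, then every `φ`-invariant ergodic Borel probability measure `μ`
satisfies `μ C' = 1` and `supp μ ⊆ C'`; consequently the closure of the union of the
supports of all such measures is contained in `C'`. -/
theorem ergodic_measures_supported_in_attracting_center
    {M : Type*} [MetricSpace M] [CompactSpace M] [MeasurableSpace M] [BorelSpace M]
    (φ : ℝ → M → M)
    (hcont : Continuous fun q : M × ℝ => φ q.2 q.1)
    (h0 : ∀ x, φ 0 x = x)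
    (hadd : ∀ s t : ℝ, ∀ x, φ t (φ s x) = φ (s + t) x)
    (C' : Set M) (hC'comp : IsCompact C')
    (hC'inv : ∀ t : ℝ, φ t '' C' = C')
    (hattract : ∀ x : M,
      Filter.Tendsto
        (fun δ : ℝ => Filter.liminf
          (fun t : ℝ => (1 / t) *
            ∫ s in (0 : ℝ)..t,
              (Metric.thickening δ C').indicator (fun _ => (1 : ℝ)) (φ s x))
          Filter.atTop)
        (nhdsWithin 0 (Set.Ioi 0)) (nhds 1)) :
    (∀ μ : Measure M, IsProbabilityMeasure μ →
      (∀ t : ℝ, MeasurePreserving (φ t) μ μ) →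
      (∀ B : Set M, MeasurableSet B → (∀ t : ℝ, φ t ⁻¹' B = B) → μ B = 0 ∨ μ B = 1) →
      μ C' = 1 ∧ measureSupport μ ⊆ C') ∧
    closure (⋃ μ ∈ {μ : Measure M | IsProbabilityMeasure μ ∧
        (∀ t : ℝ, MeasurePreserving (φ t) μ μ) ∧
        (∀ B : Set M, MeasurableSet B → (∀ t : ℝ, φ t ⁻¹' B = B) → μ B = 0 ∨ μ B = 1)},
      measureSupport μ) ⊆ C' :=
  ergodic_measures_supported_in_attracting_center_general φ hcont C' hC'comp hattract
end

section
/- Let M be a compact metric space, let φ and ψ be flows on M, and let p ∈ M be a fixed point of both flows (φ_t(p) = p = ψ_t(p) for all t). Let θ : (M∖{p}) × ℝ → ℝ be a continuous function such that: (i) θ(x,0) = 0 and t ↦ θ(x,t) is strictly increasing for every x ≠ p; (ii) θ(x, s+t) = θ(x,s) + θ(φ_s(x), t) for all x ≠ p and s,t ∈ ℝ; (iii) ψ(x, θ(x,t)) = φ_t(x) for all x ≠ p and t ∈ ℝ; (iv) liminf_{t→+∞} θ(x,t)/t ≥ 1 for every x ≠ p. Assume further: (v) for every δ₂ > 0 there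 exists δ₁ ∈ (0,δ₂) such that for every x in the closed ball of radius δ₁ around p and every s ∈ [0,2], ψ_s(x) lies in the open ball of radius δ₂ around p; and (vi) for every x ∈ M, lim_{δ→0} liminf_{t→+∞} (1/t)∫₀ᵗ χ_{B(p,δ)}(φ_s(x)) ds = 1. Then for every x ∈ M, lim_{δ→0} liminf_{t→+∞} (1/t)∫₀ᵗ χ_{B(p,δ)}(ψ_s(x)) ds = 1; that is, {p} is an attracting center for ψ as well. -/
/-!
Fix `δ₂ > 0` and `x ≠ p`, take `δ₁` from (v) and write `τ = θ x`, so that `ψ_{τ v} x = φ_v x`.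
By compactness of `{y | δ₁ ≤ dist y p}`, `θ y h ≤ 1` for such `y` and `0 ≤ h ≤ h₀`; by the cocycle
identity, along an excursion `(a, v]` of the `φ`-orbit outside `closedBall p δ₁` we get
`τ v - τ a ≤ (v - a) / h₀ + 1`. If moreover `ψ_{τ v} x ∉ B(p, δ₂)` and `a` is the last visit
to the ball, then `τ v - τ a > 2` by (v), so the excursion is longer than `h₀` and
`τ v ≤ τ a + 2 (v - a) / h₀`. Hence the `ψ`-time spent outside `B(p, δ₂)` before `τ t` is at most
a constant plus `2 / h₀` times the `φ`-time spent outside `closedBall p δ₁` before `t`, which is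
`o(t)` by (vi); since `τ t ≥ t / 2` eventually by (iv), the `ψ`-occupation density of
`B(p, δ₂)` tends to `1`.
-/

open MeasureTheory Filter Set Topology

section OccupationTime

variable {M : Type*} {f : ℝ → M} {U : Set M}

theorem one_div_mul_integral_indicator_comp (hU : MeasurableSet (f ⁻¹' U)) {t : ℝ}
    (ht : 0 < t) :
    (1 / t) * ∫ s in (0 : ℝ)..t, U.indicator (fun _ => (1 : ℝ)) (f s)
      = 1 - volume.real (Ioc 0 t \ f ⁻¹' U) / t := by
  have hsplit := measureReal_inter_add_sdiff (μ := volume) (s := Ioc 0 t) hU measure_Ioc_lt_top.ne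
  rw [Real.volume_real_Ioc_of_le ht.le, sub_zero] at hsplit
  change (1 / t) * ∫ s in (0 : ℝ)..t, (f ⁻¹' U).indicator (fun _ => (1 : ℝ)) s = _
  rw [intervalIntegral.integral_of_le ht.le, integral_indicator_const _ hU,
    measureReal_restrict_apply hU, inter_comm, smul_eq_mul, mul_one]
  field_simp
  linarith

theorem tendsto_one_div_mul_integral_indicator_comp (hU : MeasurableSet (f ⁻¹' U))
    (h : ∀ ε > 0, ∀ᶠ t in atTop, volume (Ioc 0 t \ f ⁻¹' U) ≤ ENNReal.ofReal (ε * t)) :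
    Tendsto (fun t => (1 / t) * ∫ s in (0 : ℝ)..t, U.indicator (fun _ => (1 : ℝ)) (f s))
      atTop (𝓝 1) := by
  have hratio : Tendsto (fun t => volume.real (Ioc 0 t \ f ⁻¹' U) / t) atTop (𝓝 0) := by
    refine tendsto_order.2 ⟨fun a ha => ?_, fun a ha => ?_⟩
    · filter_upwards [eventually_gt_atTop 0] with t ht
      exact ha.trans_le (by positivity)
    · filter_upwards [h (a / 2) (half_pos ha), eventually_gt_atTop 0] with t hle ht
      rw [div_lt_iff₀ ht]
      have := ENNReal.toReal_le_of_le_ofReal (by positivity) hle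
      rw [← measureReal_def] at this
      nlinarith
  have hlim : Tendsto (fun t => 1 - volume.real (Ioc 0 t \ f ⁻¹' U) / t) atTop (𝓝 1) := by
    simpa using tendsto_const_nhds.sub hratio
  refine hlim.congr' ?_
  filter_upwards [eventually_gt_atTop 0] with t ht
  exact (one_div_mul_integral_indicator_comp hU ht).symm

theorem eventually_volume_Ioc_diff_le_of_lt_liminf (hU : MeasurableSet (f ⁻¹' U)) {ε : ℝ}
    (h : 1 - ε < liminf
      (fun t => (1 / t) * ∫ s in (0 : ℝ)..t, U.indicator (fun _ => (1 : ℝ)) (f s)) atTop) :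
    ∀ᶠ t in atTop, volume (Ioc 0 t \ f ⁻¹' U) ≤ ENNReal.ofReal (ε * t) := by
  have hbdd : IsBoundedUnder (· ≥ ·) atTop
      (fun t => (1 / t) * ∫ s in (0 : ℝ)..t, U.indicator (fun _ => (1 : ℝ)) (f s)) := by
    refine isBoundedUnder_of_eventually_ge (a := 0) ?_
    filter_upwards [eventually_gt_atTop 0] with t ht
    rw [one_div_mul_integral_indicator_comp hU ht, sub_nonneg, div_le_one ht]
    calc volume.real (Ioc 0 t \ f ⁻¹' U) ≤ volume.real (Ioc 0 t) :=
          measureReal_mono sdiff_subset measure_Ioc_lt_top.ne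
      _ = t := by rw [Real.volume_real_Ioc_of_le ht.le, sub_zero]
  filter_upwards [eventually_lt_of_lt_liminf h hbdd, eventually_gt_atTop 0] with t hlt ht
  rw [one_div_mul_integral_indicator_comp hU ht, sub_lt_sub_iff_left, div_lt_iff₀ ht] at hlt
  rw [ENNReal.le_ofReal_iff_toReal_le ((measure_mono sdiff_subset).trans_lt measure_Ioc_lt_top).ne
    (by nlinarith [measureReal_nonneg (μ := volume) (s := Ioc 0 t \ f ⁻¹' U)]),
    ← measureReal_def]
  exact hlt.le

end OccupationTime

theorem volume_biUnion_Ioc_le_ofReal_mul {A : Set ℝ} {e f : ℝ → ℝ} {c : ℝ} (hc : 0 ≤ c)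
    (hA : A.PairwiseDisjoint fun a => Ioo a (e a)) :
    volume (⋃ a ∈ A, Ioc (f a) (f a + c * (e a - a)))
      ≤ ENNReal.ofReal c * volume (⋃ a ∈ A, Ioo a (e a)) := by
  set A' := {a ∈ A | a < e a}
  have hA' : A'.PairwiseDisjoint fun a => Ioo a (e a) := hA.subset (sep_subset _ _)
  have hcount : A'.Countable :=
    hA'.countable_of_isOpen (fun _ _ => isOpen_Ioo) fun _ ha => nonempty_Ioo.2 ha.2
  have hsub : ⋃ a ∈ A, Ioc (f a) (f a + c * (e a - a))
      ⊆ ⋃ a ∈ A', Ioc (f a) (f a + c * (e a - a)) := by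
    refine iUnion₂_subset fun a ha s hs => mem_biUnion ⟨ha, ?_⟩ hs
    by_contra hea
    have hlen : c * (e a - a) ≤ 0 := mul_nonpos_of_nonneg_of_nonpos hc (by linarith [not_lt.1 hea])
    linarith [hs.1, hs.2]
  calc volume (⋃ a ∈ A, Ioc (f a) (f a + c * (e a - a)))
      ≤ ∑' a : A', volume (Ioc (f a) (f a + c * (e a - a))) :=
        (measure_mono hsub).trans (measure_biUnion_le _ hcount _)
    _ = ∑' a : A', ENNReal.ofReal c * volume (Ioo (a : ℝ) (e a)) := by
        congr 1
        ext a
        rw [Real.volume_Ioc, Real.volume_Ioo, add_sub_cancel_left, ENNReal.ofReal_mul hc]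
    _ = ENNReal.ofReal c * volume (⋃ a ∈ A', Ioo a (e a)) := by
        rw [ENNReal.tsum_mul_left, measure_biUnion hcount hA' fun _ _ => measurableSet_Ioo]
    _ ≤ ENNReal.ofReal c * volume (⋃ a ∈ A, Ioo a (e a)) :=
        mul_le_mul_right (measure_mono (biUnion_subset_biUnion_left (sep_subset _ _))) _

theorem sub_le_div_add_one_of_forall_sub_le_one {g : ℝ → ℝ} {a v h₀ : ℝ} (h₀pos : 0 < h₀)
    (hav : a ≤ v) (hg : ∀ w ∈ Icc a v, ∀ h ∈ Icc 0 h₀, g (w + h) - g w ≤ 1) :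
    g v - g a ≤ (v - a) / h₀ + 1 := by
  have hsteps : ∀ n : ℕ, ∀ b ∈ Icc a v, v - b ≤ n * h₀ → g v - g b ≤ n := by
    intro n
    induction n with
    | zero =>
      intro b hb hn
      rw [show b = v by push_cast at hn; linarith [hb.2]]
      simp
    | succ n ih =>
      intro b hb hn
      push_cast at hn ⊢
      by_cases hclose : v - b ≤ h₀
      · have hlast := hg b hb (v - b) ⟨by linarith [hb.2], hclose⟩
        rw [add_sub_cancel] at hlast
        linarith [n.cast_nonneg (α := ℝ)]
      · have hrest := ih (b + h₀) ⟨by linarith [hb.1], by linarith⟩ (by linarith)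
        linarith [hg b hb h₀ ⟨h₀pos.le, le_rfl⟩]
  have hceil := hsteps ⌈(v - a) / h₀⌉₊ a ⟨le_rfl, hav⟩
    ((div_le_iff₀ h₀pos).1 (Nat.le_ceil _))
  linarith [Nat.ceil_lt_add_one (div_nonneg (sub_nonneg.2 hav) h₀pos.le)]

/-- The first return to `G` after `a`, truncated at `t` (inserting `t` also avoids `sInf ∅ = 0`). -/
noncomputable def excursionEnd (G : Set ℝ) (t a : ℝ) : ℝ := sInf (insert t (G ∩ Ioi a))

section Excursion

variable {G : Set ℝ} {t a : ℝ}

theorem bddBelow_insert_inter_Ioi : BddBelow (insert t (G ∩ Ioi a)) :=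
  (bddBelow_Ioi.mono inter_subset_right).insert t

theorem excursionEnd_le : excursionEnd G t a ≤ t :=
  csInf_le bddBelow_insert_inter_Ioi (mem_insert _ _)

theorem excursionEnd_le_of_mem {b : ℝ} (hb : b ∈ G) (hab : a < b) : excursionEnd G t a ≤ b :=
  csInf_le bddBelow_insert_inter_Ioi (mem_insert_of_mem _ ⟨hb, hab⟩)

theorem le_excursionEnd {v : ℝ} (hvt : v ≤ t) (hgap : Ioc a v ⊆ Gᶜ) : v ≤ excursionEnd G t a := by
  refine le_csInf (insert_nonempty _ _) (forall_mem_insert.2 ⟨hvt, fun _ hw => ?_⟩)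
  by_contra! hwv
  exact hgap ⟨hw.2, hwv.le⟩ hw.1

theorem Ioo_excursionEnd_subset (ha : 0 ≤ a) : Ioo a (excursionEnd G t a) ⊆ Ioc 0 t \ G :=
  fun _ hw => ⟨⟨ha.trans_lt hw.1, hw.2.le.trans excursionEnd_le⟩,
    fun hwG => (excursionEnd_le_of_mem hwG hw.1).not_gt hw.2⟩

theorem pairwiseDisjoint_Ioo_excursionEnd :
    G.PairwiseDisjoint fun a => Ioo a (excursionEnd G t a) := by
  intro a ha b hb hab
  rcases hab.lt_or_gt with hlt | hgt
  · exact disjoint_left.2 fun w hwa hwb => by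
      linarith [excursionEnd_le_of_mem (t := t) hb hlt, hwa.2, hwb.1]
  · exact disjoint_left.2 fun w hwa hwb => by
      linarith [excursionEnd_le_of_mem (t := t) ha hgt, hwa.1, hwb.2]

end Excursion

section TimeChange

variable {τ : ℝ → ℝ} {G S : Set ℝ} {h₀ v₀ t : ℝ}

theorem Ioc_diff_subset_of_timeChange (hτ : StrictMono τ) (hτc : Continuous τ) (hτ0 : τ 0 = 0)
    (hG : IsClosed G) (h₀pos : 0 < h₀)
    (hexcursion : ∀ a v, a < v → Ioc a v ⊆ Gᶜ → τ v - τ a ≤ (v - a) / h₀ + 1)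
    (hnear : ∀ a ∈ G, ∀ v, a ≤ v → τ v - τ a ≤ 2 → τ v ∈ S)
    (hv₀ : v₀ ∈ G) (hv₀0 : 0 ≤ v₀) (ht : 0 ≤ t) :
    Ioc 0 (τ t) \ S ⊆ Ioc 0 (τ v₀) ∪
      ⋃ a ∈ G ∩ Ici 0, Ioc (τ a) (τ a + 2 / h₀ * (excursionEnd G t a - a)) := by
  rintro _ ⟨hs, hsS⟩
  obtain ⟨v, hv, rfl⟩ := intermediate_value_Icc ht hτc.continuousOn
    (show _ ∈ Icc (τ 0) (τ t) from hτ0 ▸ Ioc_subset_Icc_self hs)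
  rcases le_or_gt v v₀ with hvv₀ | hv₀v
  · exact Or.inl ⟨hs.1, hτ.monotone hvv₀⟩
  right
  have hcpt : IsCompact (G ∩ Icc 0 v) := isCompact_Icc.inter_left hG
  set a := sSup (G ∩ Icc 0 v)
  have ha : a ∈ G ∩ Icc 0 v := hcpt.sSup_mem ⟨v₀, hv₀, hv₀0, hv₀v.le⟩
  have hgap : Ioc a v ⊆ Gᶜ := fun w hw hwG =>
    (le_csSup hcpt.bddAbove ⟨hwG, ha.2.1.trans hw.1.le, hw.2⟩).not_gt hw.1
  have hfar : 2 < τ v - τ a := lt_of_not_ge fun h => hsS (hnear a ha.1 v ha.2.2 h)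
  have hav : a < v := hτ.lt_iff_lt.1 (by linarith)
  have hbound := hexcursion a v hav hgap
  have hve : (v - a) / h₀ ≤ (excursionEnd G t a - a) / h₀ := by
    gcongr
    exact le_excursionEnd hv.2 hgap
  refine mem_biUnion ⟨ha.1, ha.2.1⟩ ⟨hτ hav, ?_⟩
  have hscale : 2 / h₀ * (excursionEnd G t a - a) = 2 * ((excursionEnd G t a - a) / h₀) := by
    ring
  linarith

theorem volume_Ioc_diff_le_of_timeChange (hτ : StrictMono τ) (hτc : Continuous τ)
    (hτ0 : τ 0 = 0) (hG : IsClosed G) (h₀pos : 0 < h₀)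
    (hexcursion : ∀ a v, a < v → Ioc a v ⊆ Gᶜ → τ v - τ a ≤ (v - a) / h₀ + 1)
    (hnear : ∀ a ∈ G, ∀ v, a ≤ v → τ v - τ a ≤ 2 → τ v ∈ S)
    (hv₀ : v₀ ∈ G) (hv₀0 : 0 ≤ v₀) (ht : 0 ≤ t) :
    volume (Ioc 0 (τ t) \ S)
      ≤ ENNReal.ofReal (τ v₀) + ENNReal.ofReal (2 / h₀) * volume (Ioc 0 t \ G) := by
  have hexcursions : volume (⋃ a ∈ G ∩ Ici 0, Ioo a (excursionEnd G t a)) ≤ volume (Ioc 0 t \ G) :=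
    measure_mono (iUnion₂_subset fun a ha => Ioo_excursionEnd_subset ha.2)
  calc volume (Ioc 0 (τ t) \ S)
      ≤ volume (Ioc 0 (τ v₀)) +
          volume (⋃ a ∈ G ∩ Ici 0, Ioc (τ a) (τ a + 2 / h₀ * (excursionEnd G t a - a))) :=
        (measure_mono (Ioc_diff_subset_of_timeChange hτ hτc hτ0 hG h₀pos hexcursion hnear hv₀
          hv₀0 ht)).trans (measure_union_le _ _)
    _ ≤ ENNReal.ofReal (τ v₀) + ENNReal.ofReal (2 / h₀) * volume (Ioc 0 t \ G) := by
        rw [Real.volume_Ioc, sub_zero]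
        gcongr
        exact (volume_biUnion_Ioc_le_ofReal_mul (by positivity)
          (pairwiseDisjoint_Ioo_excursionEnd.subset inter_subset_left)).trans
          (mul_le_mul_right hexcursions _)

end TimeChange

theorem eventually_le_two_mul_of_one_le_liminf_div {τ : ℝ → ℝ} (hτ : Monotone τ) (hτ0 : τ 0 = 0)
    (h : 1 ≤ liminf (fun t => τ t / t) atTop) : ∀ᶠ T in atTop, T ≤ τ (2 * T) := by
  have hbdd : IsBoundedUnder (· ≥ ·) atTop (fun t => τ t / t) := by
    refine isBoundedUnder_of_eventually_ge (a := 0) ?_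
    filter_upwards [eventually_ge_atTop 0] with t ht
    have hτt : 0 ≤ τ t := hτ0 ▸ hτ ht
    positivity
  have hhalf : ∀ᶠ t in atTop, t / 2 ≤ τ t := by
    filter_upwards [eventually_lt_of_lt_liminf (one_half_lt_one.trans_le h) hbdd,
      eventually_gt_atTop 0] with t hlt ht
    linarith [(lt_div_iff₀ ht).1 hlt]
  filter_upwards [(tendsto_id.const_mul_atTop two_pos).eventually hhalf] with T hT
  simpa using hT

theorem exists_nonneg_mem_of_eventually_volume_Ioc_diff_le {G : Set ℝ} {ε : ℝ} (hε : ε < 1)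
    (h : ∀ᶠ t in atTop, volume (Ioc 0 t \ G) ≤ ENNReal.ofReal (ε * t)) : ∃ v ∈ G, 0 ≤ v := by
  obtain ⟨t, hvol, ht⟩ := (h.and (eventually_gt_atTop 0)).exists
  by_contra! hneg
  have hdiff : Ioc 0 t \ G = Ioc 0 t :=
    sdiff_eq_left.2 (disjoint_left.2 fun v hv hvG => (hneg v hvG).not_ge hv.1.le)
  rw [hdiff, Real.volume_Ioc, sub_zero, ENNReal.ofReal_le_ofReal_iff'] at hvol
  rcases hvol with hvol | hvol <;> nlinarith

section Flow

variable {M : Type*} [MetricSpace M] {φ ψ : ℝ → M → M} {p x : M} {θ : M → ℝ → ℝ}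

theorem continuous_of_continuousOn_ne
    (hθcont : ContinuousOn (fun q : M × ℝ => θ q.1 q.2) {q : M × ℝ | q.1 ≠ p}) (hx : x ≠ p) :
    Continuous (θ x) :=
  continuous_iff_continuousAt.2 fun _ =>
    (hθcont.continuousAt ((isOpen_ne_fun continuous_fst continuous_const).mem_nhds hx)).comp
      (continuous_const.prodMk continuous_id).continuousAt

theorem exists_pos_forall_le_one_of_le_dist [CompactSpace M]
    (hθcont : ContinuousOn (fun q : M × ℝ => θ q.1 q.2) {q : M × ℝ | q.1 ≠ p})
    (hθ0 : ∀ y : M, y ≠ p → θ y 0 = 0) {δ₁ : ℝ} (hδ₁ : 0 < δ₁) :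
    ∃ h₀ > 0, ∀ y, δ₁ ≤ dist y p → ∀ h ∈ Icc 0 h₀, θ y h ≤ 1 := by
  set K := {y : M | δ₁ ≤ dist y p}
  have hK : IsCompact K :=
    (isClosed_le continuous_const (continuous_id.dist continuous_const)).isCompact
  have hKp : ∀ y ∈ K, y ≠ p := fun y hy hyp => by
    have hdist : δ₁ ≤ dist y p := hy
    rw [hyp, dist_self] at hdist
    linarith
  have hev : ∀ᶠ h in 𝓝 (0 : ℝ), ∀ y ∈ K, θ y h < 1 := by
    refine hK.eventually_forall_of_forall_eventually fun y hy => ?_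
    have hcont : ContinuousAt (fun z : ℝ × M => θ z.2 z.1) (0, y) :=
      (hθcont.continuousAt ((isOpen_ne_fun continuous_fst continuous_const).mem_nhds
        (hKp y hy))).comp continuous_swap.continuousAt
    exact hcont.eventually (gt_mem_nhds (by simp [hθ0 y (hKp y hy)]))
  obtain ⟨ε, hε, hball⟩ := Metric.eventually_nhds_iff.1 hev
  refine ⟨ε / 2, half_pos hε, fun y hy h hh => (hball ?_ y hy).le⟩
  rw [Real.dist_eq, sub_zero, abs_of_nonneg hh.1]
  linarith [hh.2]

theorem sub_le_div_add_one_of_Ioc_subset (hφx : Continuous fun s => φ s x)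
    (hθcocycle : ∀ s t : ℝ, θ x (s + t) = θ x s + θ (φ s x) t) {δ₁ h₀ : ℝ} (h₀pos : 0 < h₀)
    (hθbound : ∀ y, δ₁ ≤ dist y p → ∀ h ∈ Icc 0 h₀, θ y h ≤ 1) {a v : ℝ} (hav : a < v)
    (hgap : Ioc a v ⊆ ((fun s => φ s x) ⁻¹' Metric.closedBall p δ₁)ᶜ) :
    θ x v - θ x a ≤ (v - a) / h₀ + 1 := by
  have hfar : Icc a v ⊆ {w | δ₁ ≤ dist (φ w x) p} := by
    rw [← closure_Ioc hav.ne]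
    exact (isClosed_le continuous_const (hφx.dist continuous_const)).closure_subset_iff.2
      fun w hw => show δ₁ ≤ dist (φ w x) p from (not_le.1 fun hw' => hgap hw hw').le
  refine sub_le_div_add_one_of_forall_sub_le_one h₀pos hav.le fun w hw h hh => ?_
  rw [hθcocycle, add_sub_cancel_left]
  exact hθbound _ (hfar hw) h hh

theorem mem_preimage_ball_of_sub_le_two (hψadd : ∀ s t : ℝ, ∀ x, ψ t (ψ s x) = ψ (s + t) x)
    (hθtransfer : ∀ t : ℝ, ψ (θ x t) x = φ t x) (hθmono : Monotone (θ x)) {δ₁ δ₂ : ℝ}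
    (hψnear : ∀ y ∈ Metric.closedBall p δ₁, ∀ s ∈ Icc (0 : ℝ) 2, ψ s y ∈ Metric.ball p δ₂)
    {a v : ℝ} (ha : a ∈ (fun s => φ s x) ⁻¹' Metric.closedBall p δ₁) (hav : a ≤ v)
    (h2 : θ x v - θ x a ≤ 2) : θ x v ∈ (fun s => ψ s x) ⁻¹' Metric.ball p δ₂ := by
  have hball : ψ (θ x v - θ x a) (φ a x) ∈ Metric.ball p δ₂ :=
    hψnear _ ha _ ⟨sub_nonneg.2 (hθmono hav), h2⟩
  rwa [← hθtransfer a, hψadd, add_sub_cancel] at hball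

theorem eventually_volume_Ioc_diff_preimage_closedBall_le {f : ℝ → M} (hf : Continuous f)
    (hattract : Tendsto (fun δ => liminf (fun t => (1 / t) *
        ∫ s in (0 : ℝ)..t, (Metric.ball p δ).indicator (fun _ => (1 : ℝ)) (f s)) atTop)
      (𝓝[>] 0) (𝓝 1))
    {δ₁ ε : ℝ} (hδ₁ : 0 < δ₁) (hε : 0 < ε) :
    ∀ᶠ t in atTop, volume (Ioc 0 t \ f ⁻¹' Metric.closedBall p δ₁) ≤ ENNReal.ofReal (ε * t) := by
  obtain ⟨δ, hδ, hδδ₁⟩ := ((hattract.eventually (lt_mem_nhds (by linarith : 1 - ε < 1))).and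
    (eventually_nhdsWithin_of_eventually_nhds (gt_mem_nhds hδ₁))).exists
  filter_upwards [eventually_volume_Ioc_diff_le_of_lt_liminf
    (Metric.isOpen_ball.preimage hf).measurableSet hδ] with t ht
  refine (measure_mono (sdiff_subset_sdiff_right (preimage_mono ?_))).trans ht
  exact Metric.ball_subset_closedBall.trans (Metric.closedBall_subset_closedBall hδδ₁.le)

theorem eventually_volume_Ioc_diff_preimage_ball_le [CompactSpace M]
    (hφx : Continuous fun s => φ s x) (hψadd : ∀ s t : ℝ, ∀ x, ψ t (ψ s x) = ψ (s + t) x)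
    (hθcont : ContinuousOn (fun q : M × ℝ => θ q.1 q.2) {q : M × ℝ | q.1 ≠ p})
    (hθ0 : ∀ y : M, y ≠ p → θ y 0 = 0) (hθmono : StrictMono (θ x))
    (hθcocycle : ∀ s t : ℝ, θ x (s + t) = θ x s + θ (φ s x) t)
    (hθtransfer : ∀ t : ℝ, ψ (θ x t) x = φ t x)
    (hθgrowth : 1 ≤ liminf (fun t : ℝ => θ x t / t) atTop)
    (hφattract : Tendsto (fun δ => liminf (fun t => (1 / t) *
        ∫ s in (0 : ℝ)..t, (Metric.ball p δ).indicator (fun _ => (1 : ℝ)) (φ s x)) atTop)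
      (𝓝[>] 0) (𝓝 1))
    (hx : x ≠ p) {δ₁ δ₂ ε : ℝ} (hδ₁ : 0 < δ₁)
    (hψnear : ∀ y ∈ Metric.closedBall p δ₁, ∀ s ∈ Icc (0 : ℝ) 2, ψ s y ∈ Metric.ball p δ₂)
    (hε : 0 < ε) :
    ∀ᶠ T in atTop,
      volume (Ioc 0 T \ (fun s => ψ s x) ⁻¹' Metric.ball p δ₂) ≤ ENNReal.ofReal (ε * T) := by
  obtain ⟨h₀, h₀pos, hθbound⟩ := exists_pos_forall_le_one_of_le_dist hθcont hθ0 hδ₁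
  obtain ⟨v₀, hv₀, hv₀0⟩ := exists_nonneg_mem_of_eventually_volume_Ioc_diff_le one_half_lt_one
    (eventually_volume_Ioc_diff_preimage_closedBall_le hφx hφattract hδ₁ one_half_pos)
  have hτ0 : θ x 0 = 0 := hθ0 x hx
  have hτv₀ : 0 ≤ θ x v₀ := hτ0 ▸ hθmono.monotone hv₀0
  have hcover : ∀ t, 0 ≤ t → volume (Ioc 0 (θ x t) \ (fun s => ψ s x) ⁻¹' Metric.ball p δ₂)
      ≤ ENNReal.ofReal (θ x v₀) + ENNReal.ofReal (2 / h₀) *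
        volume (Ioc 0 t \ (fun s => φ s x) ⁻¹' Metric.closedBall p δ₁) :=
    fun t ht => volume_Ioc_diff_le_of_timeChange hθmono (continuous_of_continuousOn_ne hθcont hx)
      hτ0 (Metric.isClosed_closedBall.preimage hφx) h₀pos
      (fun _ _ hav hgap => sub_le_div_add_one_of_Ioc_subset hφx hθcocycle h₀pos hθbound hav hgap)
      (fun _ ha _ hav h2 => mem_preimage_ball_of_sub_le_two hψadd hθtransfer hθmono.monotone
        hψnear ha hav h2) hv₀ hv₀0 ht
  have hdouble : Tendsto (fun T : ℝ => 2 * T) atTop atTop := tendsto_id.const_mul_atTop two_pos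
  have hgrowth := eventually_le_two_mul_of_one_le_liminf_div hθmono.monotone hτ0 hθgrowth
  filter_upwards [hgrowth, hdouble.eventually (eventually_volume_Ioc_diff_preimage_closedBall_le
      hφx hφattract hδ₁ (ε := h₀ * ε / 8) (by positivity)),
    eventually_ge_atTop (2 * θ x v₀ / ε), eventually_ge_atTop 0] with T hT hφT hTlarge hT0
  have hτv₀_le : θ x v₀ ≤ ε * T / 2 := by
    linarith [(div_le_iff₀ hε).1 hTlarge]
  calc volume (Ioc 0 T \ (fun s => ψ s x) ⁻¹' Metric.ball p δ₂)
      ≤ volume (Ioc 0 (θ x (2 * T)) \ (fun s => ψ s x) ⁻¹' Metric.ball p δ₂) :=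
        measure_mono (sdiff_subset_sdiff_left (Ioc_subset_Ioc_right hT))
    _ ≤ ENNReal.ofReal (θ x v₀) + ENNReal.ofReal (2 / h₀) *
          ENNReal.ofReal (h₀ * ε / 8 * (2 * T)) :=
        (hcover _ (by positivity)).trans (by gcongr)
    _ = ENNReal.ofReal (θ x v₀ + ε * T / 2) := by
        rw [← ENNReal.ofReal_mul (by positivity), ← ENNReal.ofReal_add hτv₀ (by positivity)]
        congr 1
        field_simp
        ring
    _ ≤ ENNReal.ofReal (ε * T) := ENNReal.ofReal_le_ofReal (by linarith)

end Flow

theorem attracting_center_of_time_change_general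
    {M : Type*} [MetricSpace M] [CompactSpace M]
    (φ ψ : ℝ → M → M)
    (hφcont : Continuous fun q : M × ℝ => φ q.2 q.1)
    (hψcont : Continuous fun q : M × ℝ => ψ q.2 q.1)
    (hψadd : ∀ s t : ℝ, ∀ x, ψ t (ψ s x) = ψ (s + t) x)
    (p : M) (hψp : ∀ t : ℝ, ψ t p = p)
    (θ : M → ℝ → ℝ)
    (hθcont : ContinuousOn (fun q : M × ℝ => θ q.1 q.2) {q : M × ℝ | q.1 ≠ p})
    (hθ0 : ∀ x : M, x ≠ p → θ x 0 = 0)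
    (hθmono : ∀ x : M, x ≠ p → StrictMono (θ x))
    (hθcocycle : ∀ x : M, x ≠ p → ∀ s t : ℝ, θ x (s + t) = θ x s + θ (φ s x) t)
    (hθtransfer : ∀ x : M, x ≠ p → ∀ t : ℝ, ψ (θ x t) x = φ t x)
    (hθgrowth : ∀ x : M, x ≠ p →
      1 ≤ Filter.liminf (fun t : ℝ => θ x t / t) Filter.atTop)
    (hψnear : ∀ δ₂ > (0 : ℝ), ∃ δ₁ ∈ Set.Ioo (0 : ℝ) δ₂,
      ∀ x ∈ Metric.closedBall p δ₁, ∀ s ∈ Set.Icc (0 : ℝ) 2,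
        ψ s x ∈ Metric.ball p δ₂)
    (hφattract : ∀ x : M,
      Filter.Tendsto
        (fun δ : ℝ => Filter.liminf
          (fun t : ℝ => (1 / t) *
            ∫ s in (0 : ℝ)..t, (Metric.ball p δ).indicator (fun _ => (1 : ℝ)) (φ s x))
          Filter.atTop)
        (nhdsWithin 0 (Set.Ioi 0)) (nhds 1)) :
    ∀ x : M,
      Filter.Tendsto
        (fun δ : ℝ => Filter.liminf
          (fun t : ℝ => (1 / t) *
            ∫ s in (0 : ℝ)..t, (Metric.ball p δ).indicator (fun _ => (1 : ℝ)) (ψ s x))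
          Filter.atTop)
        (nhdsWithin 0 (Set.Ioi 0)) (nhds 1) := by
  intro x
  have hψx : Continuous fun s => ψ s x := hψcont.comp (continuous_const.prodMk continuous_id)
  refine tendsto_const_nhds.congr' ?_
  filter_upwards [self_mem_nhdsWithin] with δ₂ hδ₂
  refine (Tendsto.liminf_eq (tendsto_one_div_mul_integral_indicator_comp
    (Metric.isOpen_ball.preimage hψx).measurableSet fun ε hε => ?_)).symm
  rcases eq_or_ne x p with rfl | hx
  · have huniv : (fun s => ψ s x) ⁻¹' Metric.ball x δ₂ = univ :=
      eq_univ_of_forall fun s => by simpa [hψp] using hδ₂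
    simp [huniv]
  obtain ⟨δ₁, hδ₁, hψnear₁⟩ := hψnear δ₂ hδ₂
  have hφx : Continuous fun s => φ s x := hφcont.comp (continuous_const.prodMk continuous_id)
  exact eventually_volume_Ioc_diff_preimage_ball_le
    hφx hψadd hθcont hθ0 (hθmono x hx)
    (hθcocycle x hx) (hθtransfer x hx) (hθgrowth x hx) (hφattract x) hx hδ₁.1 hψnear₁ hε

/-- Claim 3.2 of the paper. Let `φ` and `ψ` be flows on a compact metric
space `M` with common fixed point `p`, related by a continuous time reparameterization
`θ` on `M \ {p}` satisfying the cocycle identity, `ψ (θ x t) x = φ t x`, and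
`liminf θ(x,t)/t ≥ 1`.  Assume moreover that points near `p` stay near `p` under `ψ` for
times in `[0,2]`, and that `{p}` is an attracting center for `φ`.  Then `{p}` is an
attracting center for `ψ` as well. -/
theorem attracting_center_of_time_change
    {M : Type*} [MetricSpace M] [CompactSpace M]
    (φ ψ : ℝ → M → M)
    (hφcont : Continuous fun q : M × ℝ => φ q.2 q.1)
    (hφ0 : ∀ x, φ 0 x = x)
    (hφadd : ∀ s t : ℝ, ∀ x, φ t (φ s x) = φ (s + t) x)
    (hψcont : Continuous fun q : M × ℝ => ψ q.2 q.1)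
    (hψ0 : ∀ x, ψ 0 x = x)
    (hψadd : ∀ s t : ℝ, ∀ x, ψ t (ψ s x) = ψ (s + t) x)
    (p : M) (hφp : ∀ t : ℝ, φ t p = p) (hψp : ∀ t : ℝ, ψ t p = p)
    (θ : M → ℝ → ℝ)
    (hθcont : ContinuousOn (fun q : M × ℝ => θ q.1 q.2) {q : M × ℝ | q.1 ≠ p})
    (hθ0 : ∀ x : M, x ≠ p → θ x 0 = 0)
    (hθmono : ∀ x : M, x ≠ p → StrictMono (θ x))
    (hθcocycle : ∀ x : M, x ≠ p → ∀ s t : ℝ, θ x (s + t) = θ x s + θ (φ s x) t)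
    (hθtransfer : ∀ x : M, x ≠ p → ∀ t : ℝ, ψ (θ x t) x = φ t x)
    (hθgrowth : ∀ x : M, x ≠ p →
      1 ≤ Filter.liminf (fun t : ℝ => θ x t / t) Filter.atTop)
    (hψnear : ∀ δ₂ > (0 : ℝ), ∃ δ₁ ∈ Set.Ioo (0 : ℝ) δ₂,
      ∀ x ∈ Metric.closedBall p δ₁, ∀ s ∈ Set.Icc (0 : ℝ) 2,
        ψ s x ∈ Metric.ball p δ₂)
    (hφattract : ∀ x : M,
      Filter.Tendsto
        (fun δ : ℝ => Filter.liminf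
          (fun t : ℝ => (1 / t) *
            ∫ s in (0 : ℝ)..t, (Metric.ball p δ).indicator (fun _ => (1 : ℝ)) (φ s x))
          Filter.atTop)
        (nhdsWithin 0 (Set.Ioi 0)) (nhds 1)) :
    ∀ x : M,
      Filter.Tendsto
        (fun δ : ℝ => Filter.liminf
          (fun t : ℝ => (1 / t) *
            ∫ s in (0 : ℝ)..t, (Metric.ball p δ).indicator (fun _ => (1 : ℝ)) (ψ s x))
          Filter.atTop)
        (nhdsWithin 0 (Set.Ioi 0)) (nhds 1) :=
  attracting_center_of_time_change_general φ ψ hφcont hψcont hψadd p hψp θ hθcont hθ0 hθmono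
    hθcocycle hθtransfer hθgrowth hψnear hφattract
end
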